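/- For any integers 0 ≤ m ≤ n, there exists (on a possibly enlarged probability space) a random walk Ŝ with Ŝ_0 = 0 and i.i.d. increments distributed as Poisson(1)−1, such that P( ∃ k ∈ {0,…,n−m} : S_{k+m}−S_m ≠ Ŝ_k ) ≤ 2 Σ_{j=j_m+1}^{j_n} r_j² + 2 Σ_{k=m}^n δ_k. -/

import Mathlib

noncomputable section
open scoped Classical
open MeasureTheory ProbabilityTheory Finset Filter

namespace WRTHeight

/-! ### Trees encoded by parent functions -/

/-- Truncated parent map: the parent of vertex `n ≥ 2` is `par n`, forced to be `< n`;
the root `1` (and the irrelevant `0`) get parent `0`. -/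
def parentFun (par : ℕ → ℕ) (n : ℕ) : ℕ := if n ≤ 1 then 0 else min (par n) (n - 1)

lemma parentFun_lt (par : ℕ → ℕ) {n : ℕ} (hn : 1 ≤ n) : parentFun par n < n := by
  unfold parentFun; split <;> omega

/-- Height of vertex `n` in the tree encoded by `par`. -/
def htFun (par : ℕ → ℕ) (n : ℕ) : ℕ :=
  if h : n ≤ 1 then 0 else htFun par (parentFun par n) + 1
termination_by n
decreasing_by exact parentFun_lt par (by omega)

/-- Most recent ancestor of vertex `n` whose label is at most `k`. -/
def ancFun (par : ℕ → ℕ) (k n : ℕ) : ℕ :=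
  if n ≤ k then n else if h : n ≤ 1 then n else ancFun par k (parentFun par n)
termination_by n
decreasing_by exact parentFun_lt par (by omega)

/-- Most recent common ancestor (its label) of vertices `i` and `j`. -/
def mrcaFun (par : ℕ → ℕ) (i j : ℕ) : ℕ :=
  if h0 : i = j then i
  else if h1 : j < i then mrcaFun par (parentFun par i) j
  else mrcaFun par i (parentFun par j)
termination_by i + j
decreasing_by
  · have := parentFun_lt par (n := i) (by omega); omega
  · have := parentFun_lt par (n := j) (by omega); omega

/-- Graph distance between vertices `i` and `j` in the tree encoded by `par`. -/
def distFun (par : ℕ → ℕ) (i j : ℕ) : ℕ :=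
  htFun par i + htFun par j - 2 * htFun par (mrcaFun par i j)

/-- Height of the tree with vertices `1, …, n`. -/
def treeHeight (par : ℕ → ℕ) (n : ℕ) : ℕ := (Finset.Icc 1 n).sup (htFun par)

/-- Diameter of the tree with vertices `1, …, n`. -/
def treeDiam (par : ℕ → ℕ) (n : ℕ) : ℕ :=
  ((Finset.Icc 1 n) ×ˢ (Finset.Icc 1 n)).sup fun p => distFun par p.1 p.2

/-- Out-degree of vertex `k` in the tree with vertices `1, …, n`. -/
def outDeg (par : ℕ → ℕ) (n k : ℕ) : ℕ :=
  ((Finset.Icc 2 n).filter fun m => parentFun par m = k).card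

/-! ### Weights and assumptions -/

/-- Partial sums `W_n = w_1 + ⋯ + w_n`. -/
def psum (w : ℕ → ℝ) (n : ℕ) : ℝ := ∑ i ∈ Finset.Icc 1 n, w i

/-- The weights are nonnegative and `w₁ > 0`. -/
def GoodWeights (w : ℕ → ℝ) : Prop := 0 < w 1 ∧ ∀ n, 1 ≤ n → 0 ≤ w n

/-- Assumption `(H_{1,γ})`: `W_n = λ n^γ + O(n^{γ-α})` for some `λ>0`, `α ∈ (0,1)`. -/
def H1 (w : ℕ → ℝ) (γ : ℝ) : Prop :=
  0 < γ ∧ ∃ lam > (0:ℝ), ∃ α ∈ Set.Ioo (0:ℝ) 1, ∃ C > (0:ℝ),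
    ∀ n : ℕ, 1 ≤ n → |psum w n - lam * (n:ℝ) ^ γ| ≤ C * (n:ℝ) ^ (γ - α)

/-- Assumption `(H₂)`: `∑_{i ≥ n} (w_i/W_i)² = O(1/n)`. -/
def H2 (w : ℕ → ℝ) : Prop :=
  Summable (fun i : ℕ => (w i / psum w i) ^ 2) ∧
  ∃ C > (0:ℝ), ∀ n : ℕ, 1 ≤ n →
    (∑' i : ℕ, (w (n + i) / psum w (n + i)) ^ 2) ≤ C / n

/-- `θ` is the (unique) positive solution of `1 + γ(e^θ - 1 - θ e^θ) = 0`. -/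
def IsTheta (γ θ : ℝ) : Prop :=
  0 < θ ∧ 1 + γ * (Real.exp θ - 1 - θ * Real.exp θ) = 0

/-- The weighted recursive tree process with weight sequence `w`: the parent labels
`par (n+1)` are independent with `P(par (n+1) = k) = w_k / W_n` for `1 ≤ k ≤ n`. -/
def IsWRT {Ω : Type*} [MeasurableSpace Ω] (P : Measure Ω) (w : ℕ → ℝ)
    (par : ℕ → Ω → ℕ) : Prop :=
  (∀ n, Measurable (par n)) ∧
  iIndepFun par P ∧
  ∀ n : ℕ, 1 ≤ n → ∀ k : ℕ, 1 ≤ k → k ≤ n →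
    P {ω | par (n + 1) ω = k} = ENNReal.ofReal (w k / psum w n)

/-- The preferential attachment tree with additive fitnesses `a`. -/
def IsPAT {Ω : Type*} [MeasurableSpace Ω] (P : Measure Ω) (a : ℕ → ℝ)
    (par : ℕ → Ω → ℕ) : Prop :=
  (∀ n, Measurable (par n)) ∧
  P {ω | par 2 ω = 1} = 1 ∧
  ∀ n : ℕ, 2 ≤ n → ∀ k : ℕ, 1 ≤ k → k ≤ n → ∀ j : ℕ → ℕ,
    P ({ω | par (n + 1) ω = k} ∩ {ω | ∀ i ∈ Finset.Icc 2 n, par i ω = j i})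
      = ENNReal.ofReal (((outDeg j n k : ℝ) + a k) / (((n : ℝ) - 1) + psum a n))
        * P {ω | ∀ i ∈ Finset.Icc 2 n, par i ω = j i}

/-- Assumption `(H₁^PAT)`: `A_n = ζ n + O(n^{1-δ})`. -/
def H1PAT (a : ℕ → ℝ) (ζ : ℝ) : Prop :=
  0 < ζ ∧ ∃ δ > (0:ℝ), ∃ C > (0:ℝ),
    ∀ n : ℕ, 1 ≤ n → |psum a n - ζ * n| ≤ C * (n:ℝ) ^ ((1:ℝ) - δ)

/-- Assumption `(H₂^PAT)`: `∑_{i=1}^n a_i² = O(n)`. -/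
def H2PAT (a : ℕ → ℝ) : Prop :=
  ∃ C > (0:ℝ), ∀ n : ℕ, 1 ≤ n → (∑ i ∈ Finset.Icc 1 n, (a i) ^ 2) ≤ C * n

/-- Tightness of a family of real random variables indexed by `s ⊆ ℕ`. -/
def Tight {Ω : Type*} [MeasurableSpace Ω] (P : Measure Ω) (s : Set ℕ)
    (X : ℕ → Ω → ℝ) : Prop :=
  ∀ ε : ℝ, 0 < ε → ∃ M : ℝ, 0 < M ∧ ∀ n ∈ s, P {ω | M ≤ |X n ω|} ≤ ENNReal.ofReal ε

/-! ### Tilted quantities -/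

/-- `p_i = e^θ (w_i/W_i) / (1 + (e^θ - 1) w_i/W_i)`. -/
def pWeight (w : ℕ → ℝ) (θ : ℝ) (i : ℕ) : ℝ :=
  Real.exp θ * (w i / psum w i) / (1 + (Real.exp θ - 1) * (w i / psum w i))

/-- `Z_n = ∏_{i=2}^n (1 + (e^θ - 1) w_i/W_i)`. -/
def ZFun (w : ℕ → ℝ) (θ : ℝ) (n : ℕ) : ℝ :=
  ∏ i ∈ Finset.Icc 2 n, (1 + (Real.exp θ - 1) * (w i / psum w i))

/-- `i_k = inf { i ≥ 1 : ∑_{j=2}^i p_j ≥ k }` (with `i_0 = 1`). -/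
def iIdx (w : ℕ → ℝ) (θ : ℝ) (k : ℕ) : ℕ :=
  sInf {i : ℕ | 1 ≤ i ∧ (k : ℝ) ≤ ∑ j ∈ Finset.Icc 2 i, pWeight w θ j}

/-- `τ(n) = min { t : i_t ≥ n }`. -/
def tauFun (w : ℕ → ℝ) (θ : ℝ) (n : ℕ) : ℕ := sInf {t : ℕ | n ≤ iIdx w θ t}

/-- `x_n = ⌊(3/(2θ)) log log n⌋`. -/
def xLog (θ : ℝ) (n : ℕ) : ℤ := ⌊3 / (2 * θ) * Real.log (Real.log n)⌋

/-- Modified weight sequence `w^{(N)}`. -/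
def wMod (w : ℕ → ℝ) (N : ℕ) (i : ℕ) : ℝ :=
  if i = 1 then psum w N else if i ≤ N then 0 else w i

/-- Recentered trajectory `ht(u_m(i_k)) - k` of the vertex `m`. -/
def trajZ (w : ℕ → ℝ) (θ : ℝ) (par : ℕ → ℕ) (m k : ℕ) : ℤ :=
  (htFun par (ancFun par (iIdx w θ k) m) : ℤ) - (k : ℤ)

/-! ### Sequences of i.i.d. uniforms, the spine walks -/

/-- The uniform distribution on `(0,1)`. -/
def unifMeasure : Measure ℝ := volume.restrict (Set.Ioo 0 1)

/-- An i.i.d. sequence of uniforms on `(0,1)`. -/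
def IsIIDUniform {Ω : Type*} [MeasurableSpace Ω] (P : Measure Ω) (U : ℕ → Ω → ℝ) : Prop :=
  (∀ i, Measurable (U i)) ∧ iIndepFun U P ∧
    ∀ i, Measure.map (U i) P = unifMeasure

/-- Two jointly independent i.i.d. sequences of uniforms on `(0,1)`. -/
def IsIIDUniform2 {Ω : Type*} [MeasurableSpace Ω] (P : Measure Ω)
    (U V : ℕ → Ω → ℝ) : Prop :=
  (∀ i, Measurable (U i)) ∧ (∀ i, Measurable (V i)) ∧
  iIndepFun (β := fun _ : ℕ ⊕ ℕ => ℝ) (Sum.elim U V) P ∧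
  (∀ i, Measure.map (U i) P = unifMeasure) ∧ (∀ i, Measure.map (V i) P = unifMeasure)

/-- `p^ℓ_i` from the many-to-two lemma. -/
def pEll (w : ℕ → ℝ) (θ : ℝ) (ℓ i : ℕ) : ℝ :=
  if i < ℓ then pWeight w θ i
  else if i = ℓ then 1
  else pWeight w θ i * (1 - w i / psum w i) / (1 - pWeight w θ i * (w i / psum w i))

/-- The walk `H^ℓ_i = ∑_{j=2}^i 1{U_j ≤ p^ℓ_j}`. -/
def HEll {Ω : Type*} (w : ℕ → ℝ) (θ : ℝ) (U : ℕ → Ω → ℝ) (ℓ i : ℕ) (ω : Ω) : ℕ :=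
  ∑ j ∈ Finset.Icc 2 i, if U j ω ≤ pEll w θ ℓ j then 1 else 0

/-- The walk `H̄^ℓ` of the second spine. -/
def HBarEll {Ω : Type*} (w : ℕ → ℝ) (θ : ℝ) (U V : ℕ → Ω → ℝ) (ℓ i : ℕ) (ω : Ω) : ℕ :=
  if i ≤ ℓ then HEll w θ U ℓ i ω
  else HEll w θ U ℓ ℓ ω + ∑ j ∈ Finset.Icc (ℓ + 1) i,
    if V j ω ≤ pWeight w θ j *
        (if HEll w θ U ℓ j ω = HEll w θ U ℓ (j - 1) ω then 1 else 0) then 1 else 0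

/-- `π_ℓ = p_ℓ q_ℓ ∏_{i=ℓ+1}^n (1 - p_i q_i)`, with the convention `p₁ = q₁ = 1`. -/
def piEll (w : ℕ → ℝ) (θ : ℝ) (n ℓ : ℕ) : ℝ :=
  pWeight w θ ℓ * (w ℓ / psum w ℓ)
    * ∏ i ∈ Finset.Icc (ℓ + 1) n, (1 - pWeight w θ i * (w i / psum w i))

/-! ### Poisson walks, ladder heights and renewal functions -/

/-- The Poisson distribution with mean `1` on `ℕ`. -/
def poissonOneMeasure : Measure ℕ := (poissonPMF 1).toMeasure

/-- A random walk started at `0` with i.i.d. increments distributed as `Poisson(1) - 1`. -/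
def IsPoissonWalk {Ω : Type*} [MeasurableSpace Ω] (P : Measure Ω) (S : ℕ → Ω → ℤ) : Prop :=
  (∀ k, Measurable (S k)) ∧ (∀ ω, S 0 ω = 0) ∧
  iIndepFun (fun k ω => S (k + 1) ω - S k ω) P ∧
  ∀ k, Measure.map (fun ω => S (k + 1) ω - S k ω) P
        = Measure.map (fun m : ℕ => (m : ℤ) - 1) poissonOneMeasure

/-- A random walk started at `0` with i.i.d. increments distributed as `1 - Poisson(1)`. -/
def IsOneMinusPoissonWalk {Ω : Type*} [MeasurableSpace Ω] (P : Measure Ω)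
    (S : ℕ → Ω → ℤ) : Prop :=
  (∀ k, Measurable (S k)) ∧ (∀ ω, S 0 ω = 0) ∧
  iIndepFun (fun k ω => S (k + 1) ω - S k ω) P ∧
  ∀ k, Measure.map (fun ω => S (k + 1) ω - S k ω) P
        = Measure.map (fun m : ℕ => 1 - (m : ℤ)) poissonOneMeasure

/-- The `k`-th strict ascending ladder epoch of the path `n ↦ S n ω`. -/
def ladderEpoch {Ω : Type*} (S : ℕ → Ω → ℤ) (ω : Ω) : ℕ → ℕ
  | 0 => 0
  | k + 1 => sInf {n | ladderEpoch S ω k < n ∧ S (ladderEpoch S ω k) ω < S n ω}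

/-- The `k`-th strict ascending ladder height. -/
def ladderHeight {Ω : Type*} (S : ℕ → Ω → ℤ) (ω : Ω) (k : ℕ) : ℤ :=
  S (ladderEpoch S ω k) ω

/-- The renewal function `R(x) = ∑_k P(H_k ≤ x)` of the ladder height process of `S`. -/
def renewalFn {Ω : Type*} [MeasurableSpace Ω] (P : Measure Ω) (S : ℕ → Ω → ℤ)
    (x : ℝ) : ℝ :=
  ∑' k : ℕ, (P {ω | ((ladderHeight S ω k : ℤ) : ℝ) ≤ x}).toReal

/-! ### The generic inhomogeneous walk `S^{(r,j)}` -/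

/-- Conditions on the data `(r, j)`: `r_i ∈ [0,1]`, `j` strictly increasing, `j₀ = 1`. -/
def GoodRJ (r : ℕ → ℝ) (jseq : ℕ → ℕ) : Prop :=
  (∀ i, r i ∈ Set.Icc (0:ℝ) 1) ∧ StrictMono jseq ∧ jseq 0 = 1

/-- `Y_k = ∑_{j = j_{k-1}+1}^{j_k} 1{U_j ≤ r_j}`. -/
def Ywalk {Ω : Type*} (r : ℕ → ℝ) (jseq : ℕ → ℕ) (U : ℕ → Ω → ℝ) (k : ℕ) (ω : Ω) : ℕ :=
  ∑ j ∈ Finset.Icc (jseq (k - 1) + 1) (jseq k), if U j ω ≤ r j then 1 else 0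

/-- `S_k = (∑_{ℓ=1}^k Y_ℓ) - k`. -/
def Swalk {Ω : Type*} (r : ℕ → ℝ) (jseq : ℕ → ℕ) (U : ℕ → Ω → ℝ) (k : ℕ) (ω : Ω) : ℤ :=
  ((∑ ℓ ∈ Finset.Icc 1 k, Ywalk r jseq U ℓ ω : ℕ) : ℤ) - (k : ℤ)

/-- `δ_k = |E[Y_k] - 1|`. -/
def deltaW {Ω : Type*} [MeasurableSpace Ω] (P : Measure Ω) (r : ℕ → ℝ) (jseq : ℕ → ℕ)
    (U : ℕ → Ω → ℝ) (k : ℕ) : ℝ :=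
  |(∫ ω, (Ywalk r jseq U k ω : ℝ) ∂P) - 1|

/-- `Δ_k = max_{0 ≤ ℓ ≤ k} |E[S_ℓ]|`. -/
def DeltaW {Ω : Type*} [MeasurableSpace Ω] (P : Measure Ω) (r : ℕ → ℝ) (jseq : ℕ → ℕ)
    (U : ℕ → Ω → ℝ) (k : ℕ) : ℝ :=
  (Finset.Icc 0 k).sup' (Finset.nonempty_Icc.mpr (Nat.zero_le k))
    (fun ℓ => |∫ ω, ((Swalk r jseq U ℓ ω : ℤ) : ℝ) ∂P|)

/-- `η_k`. -/
def etaW {Ω : Type*} [MeasurableSpace Ω] (P : Measure Ω) (r : ℕ → ℝ) (jseq : ℕ → ℕ)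
    (U : ℕ → Ω → ℝ) (k : ℕ) : ℝ :=
  2 * (∑ j ∈ Finset.Icc (jseq (Nat.floor ((k:ℝ) ^ ((1:ℝ)/4))) + 1) (jseq k), (r j) ^ 2)
  + 2 * (∑ ℓ ∈ Finset.Icc (Nat.floor ((k:ℝ) ^ ((1:ℝ)/4))) k, deltaW P r jseq U ℓ)




instance : IsProbabilityMeasure unifMeasure :=
  ⟨by simp [unifMeasure, Real.volume_Ioo]⟩

/-- Poisson pmf as a real function. -/
def ppm (t : ℝ) (n : ℕ) : ℝ := Real.exp (-t) * t ^ n / (Nat.factorial n : ℝ)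

/-- Poisson cdf. -/
def pcdf (t : ℝ) (n : ℕ) : ℝ := ∑ i ∈ Finset.range (n + 1), ppm t i

/-- Reversed Poisson quantile. -/
def pq (t u : ℝ) : ℕ := sInf {n | 1 - u ≤ pcdf t n}

lemma ppm_nonneg {t : ℝ} (ht : 0 ≤ t) (n : ℕ) : 0 ≤ ppm t n := by
  unfold ppm; positivity

lemma pcdf_succ (t : ℝ) (n : ℕ) : pcdf t (n + 1) = pcdf t n + ppm t (n + 1) := by
  unfold pcdf; rw [Finset.sum_range_succ]

lemma pcdf_mono {t : ℝ} (ht : 0 ≤ t) : Monotone (pcdf t) := by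
  apply monotone_nat_of_le_succ
  intro n
  rw [pcdf_succ]
  have := ppm_nonneg ht (n + 1)
  linarith

lemma pcdf_pos {t : ℝ} (ht : 0 ≤ t) (n : ℕ) : 0 < pcdf t n := by
  have h0 : 0 < ppm t 0 := by
    unfold ppm; simp [Real.exp_pos]
  calc 0 < pcdf t 0 := by simpa [pcdf] using h0
  _ ≤ pcdf t n := pcdf_mono ht (Nat.zero_le n)

lemma pcdf_le_one {t : ℝ} (ht : 0 ≤ t) (n : ℕ) : pcdf t n ≤ 1 := by
  have h : pcdf t n = Real.exp (-t) * ∑ i ∈ Finset.range (n + 1), t ^ i / (Nat.factorial i : ℝ) := by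
    unfold pcdf ppm
    rw [Finset.mul_sum]
    exact Finset.sum_congr rfl fun i _ => by ring
  rw [h]
  have hs := Real.sum_le_exp_of_nonneg ht (n + 1)
  calc Real.exp (-t) * ∑ i ∈ Finset.range (n + 1), t ^ i / (Nat.factorial i : ℝ)
      ≤ Real.exp (-t) * Real.exp t := by
        exact mul_le_mul_of_nonneg_left hs (le_of_lt (Real.exp_pos _))
  _ = 1 := by rw [← Real.exp_add]; simp

lemma one_sub_pcdf_le {t : ℝ} (ht : 0 ≤ t) (ht1 : t ≤ 1) (n : ℕ) :
    1 - pcdf t n ≤ 2 / (n + 1) := by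
  have habs : |t| ≤ 1 := by rw [abs_of_nonneg ht]; exact ht1
  have hb := Real.exp_bound habs (n := n + 1) (Nat.succ_pos n)
  have hb2 := (abs_le.mp hb).2
  have hsum : pcdf t n = Real.exp (-t) * ∑ i ∈ Finset.range (n + 1), t ^ i / (Nat.factorial i : ℝ) := by
    unfold pcdf ppm; rw [Finset.mul_sum]; exact Finset.sum_congr rfl fun i _ => by ring
  have hexple : Real.exp (-t) ≤ 1 := by
    rw [Real.exp_le_one_iff]; linarith
  have hexppos := Real.exp_pos (-t)
  have hS_le : ∑ i ∈ Finset.range (n + 1), t ^ i / (Nat.factorial i : ℝ) ≤ Real.exp t :=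
    Real.sum_le_exp_of_nonneg ht (n + 1)
  have h1 : 1 - pcdf t n = Real.exp (-t) * (Real.exp t - ∑ i ∈ Finset.range (n + 1), t ^ i / (Nat.factorial i : ℝ)) := by
    rw [hsum, mul_sub, ← Real.exp_add]; simp
  set B : ℝ := |t| ^ (n + 1) * ((n + 1).succ / ((Nat.factorial (n+1) : ℝ) * ((n+1 : ℕ) : ℝ))) with hB
  have h2 : Real.exp t - ∑ i ∈ Finset.range (n + 1), t ^ i / (Nat.factorial i : ℝ) ≤ B := hb2
  have h3 : B ≤ 2 / (n + 1) := by
    rw [hB]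
    have hpow : |t| ^ (n + 1) ≤ 1 := pow_le_one₀ (abs_nonneg t) habs
    have hfac : ((n + 1) : ℝ) ≤ ((Nat.factorial (n+1) : ℝ)) := by
      exact_mod_cast Nat.cast_le.mpr (Nat.self_le_factorial (n + 1))
    have hpos : (0:ℝ) < (n : ℝ) + 1 := by positivity
    have hfacpos : (0:ℝ) < ((Nat.factorial (n+1) : ℝ)) := by positivity
    have hq : (((n + 1).succ : ℝ) / ((Nat.factorial (n+1) : ℝ) * ((n+1:ℕ) : ℝ))) ≤ 2 / ((n:ℝ) + 1) := by
      rw [div_le_div_iff₀ (by positivity) hpos]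
      push_cast
      nlinarith [hfac, hpos]
    calc |t| ^ (n + 1) * (((n + 1).succ : ℝ) / ((Nat.factorial (n+1) : ℝ) * ((n+1:ℕ) : ℝ)))
        ≤ 1 * (((n + 1).succ : ℝ) / ((Nat.factorial (n+1) : ℝ) * ((n+1:ℕ) : ℝ))) := by
          apply mul_le_mul_of_nonneg_right hpow; positivity
    _ = (((n + 1).succ : ℝ) / ((Nat.factorial (n+1) : ℝ) * ((n+1:ℕ) : ℝ))) := one_mul _
    _ ≤ 2 / ((n:ℝ) + 1) := hq
  calc 1 - pcdf t n = Real.exp (-t) * (Real.exp t - ∑ i ∈ Finset.range (n + 1), t ^ i / (Nat.factorial i : ℝ)) := h1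
  _ ≤ 1 * (Real.exp t - ∑ i ∈ Finset.range (n + 1), t ^ i / (Nat.factorial i : ℝ)) := by
      apply mul_le_mul_of_nonneg_right hexple
      have h0 := (abs_le.mp hb).1
      have h4 : (0:ℝ) ≤ B := by rw [hB]; positivity
      linarith [h0]
  _ ≤ 2 / (n + 1) := by rw [one_mul]; linarith [h2, h3]

lemma pq_set_nonempty {t u : ℝ} (ht : 0 ≤ t) (ht1 : t ≤ 1) (hu : 0 < u) :
    {n : ℕ | 1 - u ≤ pcdf t n}.Nonempty := by
  obtain ⟨n, hn⟩ := exists_nat_gt (2 / u)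
  refine ⟨n, ?_⟩
  have hle := one_sub_pcdf_le ht ht1 n
  have hpos : (0:ℝ) < (n:ℝ) + 1 := by positivity
  have : 2 / ((n:ℝ) + 1) < u := by
    rw [div_lt_iff₀ hpos]
    have h2u : 2 / u < (n:ℝ) := hn
    have : 2 < u * (n:ℝ) := by
      rw [div_lt_iff₀ hu] at h2u; linarith [h2u]
    nlinarith
  simp only [Set.mem_setOf_eq]
  linarith

lemma pq_le_iff {t u : ℝ} (ht : 0 ≤ t) (ht1 : t ≤ 1) (hu : 0 < u) (n : ℕ) :
    pq t u ≤ n ↔ 1 - u ≤ pcdf t n := by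
  constructor
  · intro h
    have hmem := Nat.sInf_mem (pq_set_nonempty ht ht1 hu)
    have : pcdf t (pq t u) ≤ pcdf t n := pcdf_mono ht h
    exact le_trans hmem this
  · intro h
    exact Nat.sInf_le h

lemma pq_pos_lt {t u : ℝ} (ht : 0 ≤ t) (h : 1 ≤ pq t u) : u < 1 - Real.exp (-t) := by
  by_contra hc
  push_neg at hc
  have h0 : 1 - u ≤ pcdf t 0 := by
    have : pcdf t 0 = Real.exp (-t) := by simp [pcdf, ppm]
    rw [this]; linarith
  have : pq t u = 0 := Nat.sInf_eq_zero.mpr (Or.inl h0)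
  omega

lemma measurableSet_pq_le {t : ℝ} (ht : 0 ≤ t) (n : ℕ) :
    MeasurableSet {u : ℝ | pq t u ≤ n} := by
  have hset : {u : ℝ | pq t u ≤ n}
      = {u : ℝ | 1 - u ≤ pcdf t n} ∪ ⋂ k : ℕ, {u : ℝ | pcdf t k < 1 - u} := by
    ext u
    simp only [Set.mem_setOf_eq, Set.mem_union, Set.mem_iInter]
    constructor
    · intro h
      by_cases hne : {k : ℕ | 1 - u ≤ pcdf t k}.Nonempty
      · left
        have hmem := Nat.sInf_mem hne
        exact le_trans hmem (pcdf_mono ht h)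
      · right
        intro k
        by_contra hk
        push_neg at hk
        exact hne ⟨k, hk⟩
    · rintro (h | h)
      · exact Nat.sInf_le h
      · have : {k : ℕ | 1 - u ≤ pcdf t k} = ∅ := by
          ext k; simp only [Set.mem_setOf_eq, Set.mem_empty_iff_false, iff_false, not_le]
          exact h k
        unfold pq
        rw [this, Nat.sInf_empty]
        exact Nat.zero_le n
  rw [hset]
  apply MeasurableSet.union
  · have : {u : ℝ | 1 - u ≤ pcdf t n} = Set.Ici (1 - pcdf t n) := by
      ext u; simp [Set.mem_Ici]; constructor <;> intro <;> linarith
    rw [this]; exact measurableSet_Ici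
  · apply MeasurableSet.iInter
    intro k
    have : {u : ℝ | pcdf t k < 1 - u} = Set.Iio (1 - pcdf t k) := by
      ext u; simp [Set.mem_Iio]; constructor <;> intro <;> linarith
    rw [this]; exact measurableSet_Iio

lemma measurable_pq {t : ℝ} (ht : 0 ≤ t) : Measurable (pq t) := by
  apply measurable_to_countable'
  intro n
  have : pq t ⁻¹' {n} = {u : ℝ | pq t u ≤ n} \ (⋃ k ∈ Finset.range n, {u : ℝ | pq t u ≤ k}) := by
    ext u
    simp only [Set.mem_preimage, Set.mem_singleton_iff, Set.mem_diff, Set.mem_setOf_eq,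
      Set.mem_iUnion, Finset.mem_range]
    constructor
    · rintro rfl
      exact ⟨le_refl _, by rintro ⟨k, hk, hle⟩; omega⟩
    · rintro ⟨h1, h2⟩
      by_contra hne
      have : pq t u < n := lt_of_le_of_ne h1 hne
      exact h2 ⟨pq t u, this, le_refl _⟩
  rw [this]
  exact (measurableSet_pq_le ht n).diff
    (MeasurableSet.biUnion (Finset.range n).countable_toSet fun k _ => measurableSet_pq_le ht k)

lemma unif_apply {A : Set ℝ} (hA : MeasurableSet A) :
    unifMeasure A = volume (A ∩ Set.Ioo 0 1) :=
  Measure.restrict_apply hA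

lemma vol_inter_Ico {a b : ℝ} (h0 : 0 ≤ a) (hb : b ≤ 1) :
    volume (Set.Ioo 0 1 ∩ Set.Ico a b) = ENNReal.ofReal (b - a) := by
  apply le_antisymm
  · calc volume (Set.Ioo 0 1 ∩ Set.Ico a b) ≤ volume (Set.Ico a b) :=
          measure_mono Set.inter_subset_right
    _ = ENNReal.ofReal (b - a) := Real.volume_Ico
  · calc ENNReal.ofReal (b - a) = volume (Set.Ioo a b) := Real.volume_Ioo.symm
    _ ≤ volume (Set.Ioo 0 1 ∩ Set.Ico a b) := by
        apply measure_mono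
        intro u hu
        rcases hu with ⟨h1, h2⟩
        exact ⟨⟨lt_of_le_of_lt h0 h1, lt_of_lt_of_le h2 hb⟩, ⟨le_of_lt h1, h2⟩⟩

lemma unif_pq_eq {t : ℝ} (ht : 0 ≤ t) (ht1 : t ≤ 1) (n : ℕ) :
    unifMeasure (pq t ⁻¹' {n}) = ENNReal.ofReal (ppm t n) := by
  rw [unif_apply ((measurable_pq ht) (measurableSet_singleton n))]
  cases n with
  | zero =>
    have hset : pq t ⁻¹' {0} ∩ Set.Ioo 0 1 = Set.Ioo 0 1 ∩ Set.Ico (1 - pcdf t 0) 1 := by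
      ext u
      simp only [Set.mem_inter_iff, Set.mem_preimage, Set.mem_singleton_iff, Set.mem_Ioo,
        Set.mem_Ico]
      constructor
      · rintro ⟨hpq, hu0, hu1⟩
        refine ⟨⟨hu0, hu1⟩, ?_, hu1⟩
        have : pq t u ≤ 0 := le_of_eq hpq
        have := (pq_le_iff ht ht1 hu0 0).mp this
        linarith
      · rintro ⟨⟨hu0, hu1⟩, ha, _⟩
        refine ⟨?_, hu0, hu1⟩
        have : pq t u ≤ 0 := (pq_le_iff ht ht1 hu0 0).mpr (by linarith)
        omega
    rw [hset, vol_inter_Ico (by linarith [pcdf_le_one ht 0]) le_rfl]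
    have : pcdf t 0 = ppm t 0 := by simp [pcdf]
    rw [← this]; ring_nf
  | succ n =>
    have hset : pq t ⁻¹' {n + 1} ∩ Set.Ioo 0 1
        = Set.Ioo 0 1 ∩ Set.Ico (1 - pcdf t (n + 1)) (1 - pcdf t n) := by
      ext u
      simp only [Set.mem_inter_iff, Set.mem_preimage, Set.mem_singleton_iff, Set.mem_Ioo,
        Set.mem_Ico]
      constructor
      · rintro ⟨hpq, hu0, hu1⟩
        refine ⟨⟨hu0, hu1⟩, ?_, ?_⟩
        · have : pq t u ≤ n + 1 := le_of_eq hpq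
          have := (pq_le_iff ht ht1 hu0 (n + 1)).mp this
          linarith
        · have : ¬ pq t u ≤ n := by omega
          have : ¬ (1 - u ≤ pcdf t n) := fun h => this ((pq_le_iff ht ht1 hu0 n).mpr h)
          push_neg at this
          linarith
      · rintro ⟨⟨hu0, hu1⟩, ha, hb⟩
        refine ⟨?_, hu0, hu1⟩
        have h1 : pq t u ≤ n + 1 := (pq_le_iff ht ht1 hu0 (n + 1)).mpr (by linarith)
        have h2 : ¬ pq t u ≤ n := by
          intro h
          have := (pq_le_iff ht ht1 hu0 n).mp h
          linarith
        omega
    rw [hset, vol_inter_Ico (by linarith [pcdf_le_one ht (n+1)])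
      (by linarith [pcdf_pos ht n])]
    congr 1
    have := pcdf_succ t n
    linarith

lemma unif_Icc_le (a b : ℝ) : unifMeasure (Set.Icc a b) ≤ ENNReal.ofReal (b - a) := by
  rw [unif_apply measurableSet_Icc]
  calc volume (Set.Icc a b ∩ Set.Ioo 0 1) ≤ volume (Set.Icc a b) :=
        measure_mono Set.inter_subset_left
  _ = ENNReal.ofReal (b - a) := Real.volume_Icc

lemma unif_Iio_le (c : ℝ) : unifMeasure (Set.Iio c) ≤ ENNReal.ofReal c := by
  rw [unif_apply measurableSet_Iio]
  calc volume (Set.Iio c ∩ Set.Ioo 0 1) ≤ volume (Set.Ioo 0 c) := by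
        apply measure_mono
        rintro u ⟨h1, h2, _⟩
        exact ⟨h2, h1⟩
  _ = ENNReal.ofReal c := by rw [Real.volume_Ioo]; ring_nf

lemma unif_Iic_eq {r : ℝ} (h0 : 0 ≤ r) (h1 : r ≤ 1) :
    unifMeasure (Set.Iic r) = ENNReal.ofReal r := by
  rw [unif_apply measurableSet_Iic]
  apply le_antisymm
  · calc volume (Set.Iic r ∩ Set.Ioo 0 1) ≤ volume (Set.Ioc 0 r) := by
          apply measure_mono
          rintro u ⟨h2, h3, _⟩
          exact ⟨h3, h2⟩
    _ = ENNReal.ofReal r := by rw [Real.volume_Ioc]; ring_nf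
  · calc ENNReal.ofReal r = volume (Set.Ioo 0 r) := by rw [Real.volume_Ioo]; ring_nf
    _ ≤ volume (Set.Iic r ∩ Set.Ioo 0 1) := by
        apply measure_mono
        rintro u ⟨h2, h3⟩
        exact ⟨le_of_lt h3, h2, lt_of_lt_of_le h3 h1⟩

lemma unif_compl_Ioo : unifMeasure (Set.Ioo (0:ℝ) 1)ᶜ = 0 := by
  rw [unif_apply measurableSet_Ioo.compl]
  simp

lemma one_sub_exp_neg_le {t : ℝ} : 1 - Real.exp (-t) ≤ t := by
  have := Real.add_one_le_exp (-t)
  linarith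

/-- Pointwise mismatch inclusion for the Bernoulli/Poisson coupling. -/
lemma mismatch_subset {lam r u : ℝ} (hl : 0 ≤ lam) (hlr : lam ≤ r) (hr : r ≤ 1)
    (hu0 : 0 < u) (hu1 : u < 1)
    (hne : (if u ≤ r then (1:ℕ) else 0) ≠ pq lam u) :
    u ∈ Set.Icc (1 - Real.exp (-lam)) r ∪ Set.Iio (1 - pcdf lam 1) := by
  have hl1 : lam ≤ 1 := le_trans hlr hr
  by_contra hc
  simp only [Set.mem_union, Set.mem_Icc, Set.mem_Iio, not_or, not_and_or, not_le, not_lt] at hc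
  obtain ⟨hicc, hiio⟩ := hc
  have hpq1 : pq lam u ≤ 1 := (pq_le_iff hl hl1 hu0 1).mpr (by linarith)
  have hexp : 1 - Real.exp (-lam) ≤ lam := one_sub_exp_neg_le
  have hpcdf0 : pcdf lam 0 = Real.exp (-lam) := by simp [pcdf, ppm]
  rcases le_or_gt u r with hur | hur
  · -- u ≤ r, so indicator is 1
    rcases hicc with h | h
    · -- u < 1 - exp(-lam) : pq ≥ 1
      have hnot0 : ¬ pq lam u ≤ 0 := by
        intro h0
        have := (pq_le_iff hl hl1 hu0 0).mp h0
        rw [hpcdf0] at this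
        linarith
      have : pq lam u = 1 := by omega
      rw [if_pos hur] at hne
      exact hne this.symm
    · linarith
  · -- u > r : pq = 0
    have h0 : pq lam u ≤ 0 := by
      apply (pq_le_iff hl hl1 hu0 0).mpr
      rw [hpcdf0]
      linarith
    rw [if_neg (not_le.mpr hur)] at hne
    omega

lemma perj_bound {lam r : ℝ} (hl : 0 ≤ lam) (hlr : lam ≤ r) (hr : r ≤ 1) :
    (r - (1 - Real.exp (-lam))) + (1 - pcdf lam 1) ≤ (r - lam) + r ^ 2 ∧
      0 ≤ r - (1 - Real.exp (-lam)) ∧ 0 ≤ 1 - pcdf lam 1 := by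
  have hl1 : lam ≤ 1 := le_trans hlr hr
  have hpcdf1 : pcdf lam 1 = Real.exp (-lam) + Real.exp (-lam) * lam := by
    simp [pcdf, Finset.sum_range_succ, ppm]
    try ring
  have hexp : 1 - lam ≤ Real.exp (-lam) := by
    have := Real.add_one_le_exp (-lam); linarith
  have hexple1 : Real.exp (-lam) ≤ 1 := by
    rw [Real.exp_le_one_iff]; linarith
  refine ⟨?_, ?_, ?_⟩
  · rw [hpcdf1]
    nlinarith [sq_nonneg lam, sq_nonneg r]
  · have : 1 - Real.exp (-lam) ≤ lam := one_sub_exp_neg_le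
    linarith
  · linarith [pcdf_le_one hl 1]
section Indep

variable {Ω : Type*} [MeasurableSpace Ω] {P : Measure Ω} [IsProbabilityMeasure P]
  {U : ℕ → Ω → ℝ}

lemma extend_measurable (S : Finset ℕ) :
    Measurable (fun (v : ↥S → ℝ) (j : ℕ) =>
      if h : j ∈ S then v ⟨j, h⟩ else 0) := by
  apply measurable_pi_lambda
  intro j
  by_cases h : j ∈ S
  · simp only [dif_pos h]
    exact measurable_pi_apply _
  · simp only [dif_neg h]
    exact measurable_const

lemma indepFun_comp_disjoint
    (hUm : ∀ i, Measurable (U i)) (hUi : iIndepFun U P)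
    {γ δ : Type*} [MeasurableSpace γ] [MeasurableSpace δ]
    (S T : Finset ℕ) (hST : Disjoint S T)
    (F : (ℕ → ℝ) → γ) (G : (ℕ → ℝ) → δ)
    (hF : Measurable F) (hG : Measurable G)
    (hFd : ∀ x y, (∀ j ∈ S, x j = y j) → F x = F y)
    (hGd : ∀ x y, (∀ j ∈ T, x j = y j) → G x = G y) :
    IndepFun (fun ω => F (fun j => U j ω)) (fun ω => G (fun j => U j ω)) P := by
  have base : IndepFun (fun ω (i : S) => U i ω) (fun ω (i : T) => U i ω) P :=
    hUi.indepFun_finset S T hST hUm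
  set φ : (↥S → ℝ) → γ :=
    fun v => F (fun j => if h : j ∈ S then v ⟨j, h⟩ else 0) with hφ
  set ψ : (↥T → ℝ) → δ :=
    fun v => G (fun j => if h : j ∈ T then v ⟨j, h⟩ else 0) with hψ
  have hφm : Measurable φ := hF.comp (extend_measurable S)
  have hψm : Measurable ψ := hG.comp (extend_measurable T)
  have hcomp := base.comp hφm hψm
  have h1 : (φ ∘ fun ω (i : S) => U i ω) = fun ω => F (fun j => U j ω) := by
    funext ω
    exact hFd _ _ (fun j hj => by simp [dif_pos hj])
  have h2 : (ψ ∘ fun ω (i : T) => U i ω) = fun ω => G (fun j => U j ω) := by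
    funext ω
    exact hGd _ _ (fun j hj => by simp [dif_pos hj])
  rwa [h1, h2] at hcomp

lemma iIndep_comp_blocks
    (hUm : ∀ i, Measurable (U i)) (hUi : iIndepFun U P)
    {γ : Type*} [MeasurableSpace γ]
    (J : ℕ → Finset ℕ) (hJ : ∀ k l, k ≠ l → Disjoint (J k) (J l))
    (F : ℕ → (ℕ → ℝ) → γ) (hFm : ∀ k, Measurable (F k))
    (hFd : ∀ k x y, (∀ j ∈ J k, x j = y j) → F k x = F k y) :
    iIndepFun (fun k ω => F k (fun j => U j ω)) P := by
  rw [iIndepFun_iff_measure_inter_preimage_eq_mul]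
  intro S sets hsets
  induction S using Finset.induction_on with
  | empty => simp
  | @insert b s hb ih =>
    have hsets' : ∀ i ∈ s, MeasurableSet (sets i) :=
      fun i hi => hsets i (Finset.mem_insert_of_mem hi)
    set G : (ℕ → ℝ) → (↥s → γ) := fun x i => F i x with hG
    have hGm : Measurable G := measurable_pi_lambda _ (fun i => hFm i)
    set Tset : Set (↥s → γ) := Set.univ.pi (fun i => sets i) with hT
    have hTm : MeasurableSet Tset := MeasurableSet.univ_pi (fun i => hsets' i i.2)
    have key : (fun ω => G (fun j => U j ω)) ⁻¹' Tset
        = ⋂ i ∈ s, (fun ω => F i (fun j => U j ω)) ⁻¹' sets i := by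
      ext ω
      simp [hG, hT, Set.mem_pi]
    have hdisj : Disjoint (J b) (s.biUnion J) := by
      rw [Finset.disjoint_biUnion_right]
      intro i hi
      exact hJ b i (fun h => hb (h ▸ hi))
    have hind : IndepFun (fun ω => F b (fun j => U j ω)) (fun ω => G (fun j => U j ω)) P := by
      apply indepFun_comp_disjoint hUm hUi (J b) (s.biUnion J) hdisj _ _ (hFm b) hGm
      · exact fun x y h => hFd b x y h
      · intro x y h
        funext i
        exact hFd i x y (fun j hj => h j (Finset.mem_biUnion.mpr ⟨i, i.2, hj⟩))
    have hmul := hind.measure_inter_preimage_eq_mul (sets b) Tset (hsets b (Finset.mem_insert_self b s)) hTm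
    rw [Finset.set_biInter_insert, ← key, hmul, key, ih hsets', Finset.prod_insert hb]

end Indep

section Law

variable {Ω : Type*} [MeasurableSpace Ω] {P : Measure Ω} [IsProbabilityMeasure P]
  {U : ℕ → Ω → ℝ}

lemma single_pq_law (hUm : ∀ i, Measurable (U i))
    (hmap : ∀ i, Measure.map (U i) P = unifMeasure)
    {t : ℝ} (ht : 0 ≤ t) (ht1 : t ≤ 1) (i : ℕ) (a : ℕ) :
    P {ω | pq t (U i ω) = a} = ENNReal.ofReal (ppm t a) := by
  have : {ω | pq t (U i ω) = a} = (U i) ⁻¹' (pq t ⁻¹' {a}) := rfl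
  rw [this, ← Measure.map_apply (hUm i) ((measurable_pq ht) (measurableSet_singleton a)),
    hmap i, unif_pq_eq ht ht1]

lemma ppm_conv {s t : ℝ} (hs : 0 ≤ s) (ht : 0 ≤ t) (n : ℕ) :
    ∑ a ∈ Finset.range (n + 1), ppm s a * ppm t (n - a) = ppm (s + t) n := by
  have hterm : ∀ a ∈ Finset.range (n + 1),
      ppm s a * ppm t (n - a)
        = Real.exp (-(s + t)) * (s ^ a * t ^ (n - a) * (n.choose a : ℝ)) / (Nat.factorial n : ℝ) := by
    intro a ha
    have han : a ≤ n := Nat.lt_succ_iff.mp (Finset.mem_range.mp ha)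
    have hkey : ((n.choose a : ℝ)) * (Nat.factorial a : ℝ) * (Nat.factorial (n - a) : ℝ)
        = (Nat.factorial n : ℝ) := by
      exact_mod_cast congrArg (Nat.cast (R := ℝ)) (Nat.choose_mul_factorial_mul_factorial han)
    unfold ppm
    have hfa : (Nat.factorial a : ℝ) ≠ 0 := Nat.cast_ne_zero.mpr (Nat.factorial_ne_zero a)
    have hfna : (Nat.factorial (n - a) : ℝ) ≠ 0 := Nat.cast_ne_zero.mpr (Nat.factorial_ne_zero _)
    have hfn : (Nat.factorial n : ℝ) ≠ 0 := Nat.cast_ne_zero.mpr (Nat.factorial_ne_zero n)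
    have hexp : Real.exp (-(s + t)) = Real.exp (-s) * Real.exp (-t) := by
      rw [← Real.exp_add]; ring_nf
    rw [hexp, div_mul_div_comm, div_eq_div_iff (mul_ne_zero hfa hfna) hfn]
    linear_combination (-(Real.exp (-s) * Real.exp (-t) * s ^ a * t ^ (n - a))) * hkey
  rw [Finset.sum_congr rfl hterm]
  have : ∑ a ∈ Finset.range (n + 1),
      Real.exp (-(s + t)) * (s ^ a * t ^ (n - a) * (n.choose a : ℝ)) / (Nat.factorial n : ℝ)
      = Real.exp (-(s + t)) * (∑ a ∈ Finset.range (n + 1), s ^ a * t ^ (n - a) * (n.choose a : ℝ))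
        / (Nat.factorial n : ℝ) := by
    rw [Finset.mul_sum, Finset.sum_div]
  rw [this, ← add_pow]
  rfl

lemma conv_pois {X Y : Ω → ℕ} (hX : Measurable X) (hY : Measurable Y)
    (hXY : IndepFun X Y P) {s t : ℝ} (hs : 0 ≤ s) (ht : 0 ≤ t)
    (hXl : ∀ a, P {ω | X ω = a} = ENNReal.ofReal (ppm s a))
    (hYl : ∀ b, P {ω | Y ω = b} = ENNReal.ofReal (ppm t b)) (n : ℕ) :
    P {ω | X ω + Y ω = n} = ENNReal.ofReal (ppm (s + t) n) := by
  have hset : {ω | X ω + Y ω = n}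
      = ⋃ a ∈ Finset.range (n + 1), (X ⁻¹' {a} ∩ Y ⁻¹' {n - a}) := by
    ext ω
    simp only [Set.mem_setOf_eq, Set.mem_iUnion, Finset.mem_range, Set.mem_inter_iff,
      Set.mem_preimage, Set.mem_singleton_iff]
    constructor
    · intro h
      exact ⟨X ω, by omega, rfl, by omega⟩
    · rintro ⟨a, ha, rfl, h2⟩
      omega
  rw [hset, measure_biUnion_finset]
  · have : ∀ a ∈ Finset.range (n + 1),
        P (X ⁻¹' {a} ∩ Y ⁻¹' {n - a}) = ENNReal.ofReal (ppm s a * ppm t (n - a)) := by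
      intro a _
      rw [hXY.measure_inter_preimage_eq_mul _ _ (measurableSet_singleton a)
        (measurableSet_singleton (n - a))]
      have h1 : X ⁻¹' {a} = {ω | X ω = a} := rfl
      have h2 : Y ⁻¹' {n - a} = {ω | Y ω = n - a} := rfl
      rw [h1, h2, hXl, hYl, ← ENNReal.ofReal_mul (ppm_nonneg hs a)]
    rw [Finset.sum_congr rfl this, ← ENNReal.ofReal_sum_of_nonneg
      (fun a _ => mul_nonneg (ppm_nonneg hs a) (ppm_nonneg ht _)), ppm_conv hs ht]
  · intro a ha b hb hab
    simp only [Function.onFun]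
    apply Set.disjoint_left.mpr
    rintro ω ⟨h1, _⟩ ⟨h3, _⟩
    simp only [Set.mem_preimage, Set.mem_singleton_iff] at h1 h3
    exact hab (by omega)
  · exact fun a _ => (hX (measurableSet_singleton a)).inter (hY (measurableSet_singleton _))

lemma sum_pq_law (hUm : ∀ i, Measurable (U i))
    (hUi : iIndepFun U P)
    (hmap : ∀ i, Measure.map (U i) P = unifMeasure)
    (A : Finset ℕ) (lam : ℕ → ℝ) (hlam : ∀ j ∈ A, 0 ≤ lam j ∧ lam j ≤ 1)
    (ψ : ℕ → ℕ) (hψ : Function.Injective ψ) (n : ℕ) :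
    P {ω | (∑ j ∈ A, pq (lam j) (U (ψ j) ω)) = n}
      = ENNReal.ofReal (ppm (∑ j ∈ A, lam j) n) := by
  induction A using Finset.induction_on generalizing n with
  | empty =>
    simp only [Finset.sum_empty]
    rcases Nat.eq_zero_or_pos n with rfl | hn
    · have : {ω : Ω | 0 = 0} = Set.univ := by ext; simp
      rw [this]
      simp [ppm]
    · have : {ω : Ω | (0 : ℕ) = n} = ∅ := by ext; simp; omega
      rw [this]
      have : ppm 0 n = 0 := by
        unfold ppm
        rw [zero_pow (by omega)]
        simp
      simp [this]
  | @insert a A ha ih =>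
    have hlam' : ∀ j ∈ A, 0 ≤ lam j ∧ lam j ≤ 1 :=
      fun j hj => hlam j (Finset.mem_insert_of_mem hj)
    have hla := hlam a (Finset.mem_insert_self a A)
    have hXm : Measurable (fun ω => pq (lam a) (U (ψ a) ω)) :=
      (measurable_pq hla.1).comp (hUm (ψ a))
    have hYm : Measurable (fun ω => ∑ j ∈ A, pq (lam j) (U (ψ j) ω)) := by
      apply Finset.measurable_sum
      intro j hj
      exact (measurable_pq (hlam' j hj).1).comp (hUm (ψ j))
    have hind : IndepFun (fun ω => pq (lam a) (U (ψ a) ω))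
        (fun ω => ∑ j ∈ A, pq (lam j) (U (ψ j) ω)) P := by
      have := indepFun_comp_disjoint hUm hUi {ψ a} (A.image ψ)
        (by
          simp only [Finset.disjoint_left, Finset.mem_singleton]
          rintro x rfl hx2
          obtain ⟨j, hj, hje⟩ := Finset.mem_image.mp hx2
          exact ha (hψ hje ▸ hj))
        (fun x => pq (lam a) (x (ψ a))) (fun x => ∑ j ∈ A, pq (lam j) (x (ψ j)))
        ((measurable_pq hla.1).comp (measurable_pi_apply (ψ a)))
        (Finset.measurable_sum _ (fun j hj =>
          (measurable_pq (hlam' j hj).1).comp (measurable_pi_apply (ψ j))))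
        (fun x y h => congrArg (pq (lam a)) (h (ψ a) (Finset.mem_singleton_self _)))
        (fun x y h => Finset.sum_congr rfl (fun j hj =>
          congrArg (pq (lam j)) (h (ψ j) (Finset.mem_image_of_mem ψ hj))))
      exact this
    have hXl : ∀ b, P {ω | pq (lam a) (U (ψ a) ω) = b} = ENNReal.ofReal (ppm (lam a) b) :=
      single_pq_law hUm hmap hla.1 hla.2 (ψ a)
    have hYl : ∀ b, P {ω | (∑ j ∈ A, pq (lam j) (U (ψ j) ω)) = b}
        = ENNReal.ofReal (ppm (∑ j ∈ A, lam j) b) := fun b => ih hlam' b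
    have hsum : ∀ ω, (∑ j ∈ insert a A, pq (lam j) (U (ψ j) ω))
        = pq (lam a) (U (ψ a) ω) + ∑ j ∈ A, pq (lam j) (U (ψ j) ω) :=
      fun ω => Finset.sum_insert ha
    have := conv_pois hXm hYm hind hla.1
      (Finset.sum_nonneg (fun j hj => (hlam' j hj).1)) hXl hYl n
    rw [Finset.sum_insert ha]
    rw [show {ω | (∑ j ∈ insert a A, pq (lam j) (U (ψ j) ω)) = n}
      = {ω | pq (lam a) (U (ψ a) ω) + (∑ j ∈ A, pq (lam j) (U (ψ j) ω)) = n} by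
        ext ω; rw [Set.mem_setOf_eq, hsum ω]; rfl]
    exact this

end Law
section SeqLaw

variable {Ω : Type*} [MeasurableSpace Ω] {P : Measure Ω} [IsProbabilityMeasure P]
  {U : ℕ → Ω → ℝ}

lemma iIndep_sub (hUm : ∀ i, Measurable (U i))
    (hUi : iIndepFun U P) (ψ : ℕ → ℕ)
    (hψ : Function.Injective ψ) :
    iIndepFun (fun j ω => U (ψ j) ω) P := by
  have := iIndep_comp_blocks (P := P) hUm hUi (fun j => {ψ j})
    (fun k l hkl => Finset.disjoint_singleton.mpr (fun h => hkl (hψ h)))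
    (fun j x => x (ψ j)) (fun j => measurable_pi_apply (ψ j))
    (fun k x y h => h (ψ k) (Finset.mem_singleton_self _))
  exact this

lemma map_fin_law (hUm : ∀ i, Measurable (U i))
    (hUi : iIndepFun U P)
    (hmap : ∀ i, Measure.map (U i) P = unifMeasure)
    (I : Finset ℕ) (ψ : ℕ → ℕ) (hψ : Function.Injective ψ) :
    Measure.map (fun ω (i : ↥I) => U (ψ i) ω) P = Measure.pi (fun _ : ↥I => unifMeasure) := by
  symm
  apply Measure.pi_eq
  intro s hs
  have hmeas : Measurable (fun ω (i : ↥I) => U (ψ i) ω) :=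
    measurable_pi_lambda _ (fun i => hUm (ψ i))
  rw [Measure.map_apply hmeas (MeasurableSet.univ_pi hs)]
  classical
  set s' : ℕ → Set ℝ := fun j => if h : j ∈ I then s ⟨j, h⟩ else Set.univ with hs'
  have hs'm : ∀ j, j ∈ I → MeasurableSet (s' j) := by
    intro j hj
    simp only [hs', dif_pos hj]
    exact hs _
  have hpre : (fun ω (i : ↥I) => U (ψ i) ω) ⁻¹' Set.pi Set.univ s
      = ⋂ j ∈ I, (U (ψ j)) ⁻¹' (s' j) := by
    ext ω
    simp only [Set.mem_preimage, Set.mem_pi, Set.mem_univ, forall_true_left, Set.mem_iInter]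
    constructor
    · intro h j hj
      simpa only [hs', dif_pos hj] using h ⟨j, hj⟩
    · intro h i
      have := h i.1 i.2
      simpa only [hs', dif_pos i.2] using this
  rw [hpre]
  have hsub := iIndep_sub hUm hUi ψ hψ
  rw [hsub.measure_inter_preimage_eq_mul I (fun j hj => hs'm j hj)]
  have hfac : ∀ j ∈ I, P ((fun ω => U (ψ j) ω) ⁻¹' (s' j)) = unifMeasure (s' j) := by
    intro j hj
    rw [show (fun ω => U (ψ j) ω) = U (ψ j) from rfl,
      ← hmap (ψ j), Measure.map_apply (hUm (ψ j)) (hs'm j hj)]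
  rw [Finset.prod_congr rfl hfac]
  rw [← Finset.prod_coe_sort I (fun j => unifMeasure (s' j))]
  apply Finset.prod_congr rfl
  intro i _
  congr 1
  simp only [hs', dif_pos i.2]

lemma map_seq_eq (hUm : ∀ i, Measurable (U i))
    (hUi : iIndepFun U P)
    (hmap : ∀ i, Measure.map (U i) P = unifMeasure)
    (ψ : ℕ → ℕ) (hψ : Function.Injective ψ) :
    Measure.map (fun ω (j : ℕ) => U (ψ j) ω) P = Measure.map (fun ω (j : ℕ) => U j ω) P := by
  have hm1 : Measurable (fun ω (j : ℕ) => U (ψ j) ω) :=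
    measurable_pi_lambda _ (fun j => hUm (ψ j))
  have hm2 : Measurable (fun ω (j : ℕ) => U j ω) :=
    measurable_pi_lambda _ (fun j => hUm j)
  haveI : IsProbabilityMeasure (Measure.map (fun ω (j : ℕ) => U (ψ j) ω) P) :=
    Measure.isProbabilityMeasure_map hm1.aemeasurable
  haveI : IsProbabilityMeasure (Measure.map (fun ω (j : ℕ) => U j ω) P) :=
    Measure.isProbabilityMeasure_map hm2.aemeasurable
  apply ext_of_generate_finite (measurableCylinders (fun _ : ℕ => ℝ))
    (@generateFrom_measurableCylinders ℕ (fun _ => ℝ) (fun _ => inferInstance)).symm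
    (@isPiSystem_measurableCylinders ℕ (fun _ => ℝ) (fun _ => inferInstance))
  · intro t ht
    obtain ⟨I, S, hS, rfl⟩ := (mem_measurableCylinders t).mp ht
    have hcylm : MeasurableSet (cylinder I S) := MeasurableSet.cylinder (α := fun _ : ℕ => ℝ) I hS
    rw [Measure.map_apply hm1 hcylm, Measure.map_apply hm2 hcylm]
    have h1 : (fun ω (j : ℕ) => U (ψ j) ω) ⁻¹' (cylinder I S)
        = (fun ω (i : ↥I) => U (ψ i) ω) ⁻¹' S := rfl
    have h2 : (fun ω (j : ℕ) => U j ω) ⁻¹' (cylinder I S)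
        = (fun ω (i : ↥I) => U (i : ℕ) ω) ⁻¹' S := rfl
    rw [h1, h2]
    have e1 := map_fin_law hUm hUi hmap I ψ hψ
    have e2 := map_fin_law hUm hUi hmap I (fun j => j) (fun a b h => h)
    calc P ((fun ω (i : ↥I) => U (ψ ↑i) ω) ⁻¹' S)
        = Measure.map (fun ω (i : ↥I) => U (ψ ↑i) ω) P S :=
          (Measure.map_apply (measurable_pi_lambda _ (fun i : ↥I => hUm (ψ ↑i))) hS).symm
      _ = Measure.pi (fun _ : ↥I => unifMeasure) S := by rw [e1]
      _ = Measure.map (fun ω (i : ↥I) => U ↑i ω) P S := by rw [e2]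
      _ = P ((fun ω (i : ↥I) => U ↑i ω) ⁻¹' S) :=
          Measure.map_apply (measurable_pi_lambda _ (fun i : ↥I => hUm ↑i)) hS
  · simp

end SeqLaw


lemma poissonOne_singleton (a : ℕ) :
    poissonOneMeasure {a} = ENNReal.ofReal (ppm 1 a) := by
  rw [poissonOneMeasure, PMF.toMeasure_apply_singleton _ _ (measurableSet_singleton a)]
  have : poissonPMF 1 a = ENNReal.ofReal (poissonPMFReal 1 a) := rfl
  rw [this]
  unfold poissonPMFReal ppm
  norm_num

section BlockDefs

/-- The `k`-th block. -/
def blockB (jseq : ℕ → ℕ) (k : ℕ) : Finset ℕ := Finset.Icc (jseq (k - 1) + 1) (jseq k)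

def sB (r : ℕ → ℝ) (jseq : ℕ → ℕ) (k : ℕ) : ℝ := ∑ j ∈ blockB jseq k, r j

def tB (r : ℕ → ℝ) (jseq : ℕ → ℕ) (k : ℕ) : ℝ := min (sB r jseq k) 1

def lamB (r : ℕ → ℝ) (jseq : ℕ → ℕ) (k j : ℕ) : ℝ :=
  if sB r jseq k ≤ 1 then r j else r j / sB r jseq k

def MtF (r : ℕ → ℝ) (jseq : ℕ → ℕ) (m n k : ℕ) (p : ℕ → ℝ) : ℕ :=
  if k ≤ n - m then
    (∑ j ∈ blockB jseq (m + k), pq (lamB r jseq (m + k) j) (p (2 * j)))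
      + pq (1 - tB r jseq (m + k)) (p (2 * (m + k) + 1))
  else pq 1 (p (2 * (n + k) + 1))

def JB (jseq : ℕ → ℕ) (m n k : ℕ) : Finset ℕ :=
  if k ≤ n - m then (blockB jseq (m + k)).image (fun j => 2 * j) ∪ {2 * (m + k) + 1}
  else {2 * (n + k) + 1}

variable {r : ℕ → ℝ} {jseq : ℕ → ℕ}

lemma sB_nonneg (hr : ∀ i, r i ∈ Set.Icc (0:ℝ) 1) (k : ℕ) : 0 ≤ sB r jseq k :=
  Finset.sum_nonneg fun j _ => (hr j).1

lemma lamB_nonneg (hr : ∀ i, r i ∈ Set.Icc (0:ℝ) 1) (k j : ℕ) : 0 ≤ lamB r jseq k j := by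
  unfold lamB
  split
  · exact (hr j).1
  · next h =>
    push_neg at h
    exact div_nonneg (hr j).1 (le_of_lt (lt_trans one_pos h))

lemma lamB_le_r (hr : ∀ i, r i ∈ Set.Icc (0:ℝ) 1) (k j : ℕ) : lamB r jseq k j ≤ r j := by
  unfold lamB
  split
  · exact le_rfl
  · next h =>
    push_neg at h
    exact div_le_self (hr j).1 (le_of_lt h)

lemma lamB_le_one (hr : ∀ i, r i ∈ Set.Icc (0:ℝ) 1) (k j : ℕ) : lamB r jseq k j ≤ 1 :=
  le_trans (lamB_le_r hr k j) (hr j).2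

lemma tB_mem (hr : ∀ i, r i ∈ Set.Icc (0:ℝ) 1) (k : ℕ) :
    0 ≤ tB r jseq k ∧ tB r jseq k ≤ 1 :=
  ⟨le_min (sB_nonneg hr k) one_pos.le, min_le_right _ _⟩

lemma sum_lamB (k : ℕ) : ∑ j ∈ blockB jseq k, lamB r jseq k j = tB r jseq k := by
  unfold lamB tB
  by_cases h : sB r jseq k ≤ 1
  · simp only [if_pos h]
    rw [min_eq_left h]
    rfl
  · simp only [if_neg h]
    push_neg at h
    rw [min_eq_right (le_of_lt h), ← Finset.sum_div]
    exact div_self (ne_of_gt (lt_trans one_pos h))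

lemma sB_sub_tB_le (k : ℕ) : sB r jseq k - tB r jseq k ≤ |sB r jseq k - 1| := by
  unfold tB
  rcases le_total (sB r jseq k) 1 with h | h
  · rw [min_eq_left h]; simp [abs_nonneg]
  · rw [min_eq_right h, abs_of_nonneg (by linarith)]

lemma one_sub_tB_le (k : ℕ) : 1 - tB r jseq k ≤ |sB r jseq k - 1| := by
  unfold tB
  rcases le_total (sB r jseq k) 1 with h | h
  · rw [min_eq_left h, abs_of_nonpos (by linarith)]; linarith
  · rw [min_eq_right h]; simp [abs_nonneg]

lemma MtF_measurable (hr : ∀ i, r i ∈ Set.Icc (0:ℝ) 1) (m n k : ℕ) :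
    Measurable (MtF r jseq m n k) := by
  unfold MtF
  split
  · apply Measurable.add
    · apply Finset.measurable_sum
      intro j _
      exact (measurable_pq (lamB_nonneg hr (m + k) j)).comp (measurable_pi_apply (2 * j))
    · exact (measurable_pq (by linarith [(tB_mem (jseq := jseq) hr (m + k)).2])).comp
        (measurable_pi_apply (2 * (m + k) + 1))
  · exact (measurable_pq one_pos.le).comp (measurable_pi_apply (2 * (n + k) + 1))

lemma MtF_dep (m n k : ℕ) (x y : ℕ → ℝ) (h : ∀ j ∈ JB jseq m n k, x j = y j) :
    MtF r jseq m n k x = MtF r jseq m n k y := by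
  unfold MtF JB at *
  split
  · next hk =>
    rw [if_pos hk] at h
    congr 1
    · apply Finset.sum_congr rfl
      intro j hj
      rw [h (2 * j) (Finset.mem_union_left _ (Finset.mem_image_of_mem _ hj))]
    · rw [h (2 * (m + k) + 1) (Finset.mem_union_right _ (Finset.mem_singleton_self _))]
  · next hk =>
    rw [if_neg hk] at h
    rw [h (2 * (n + k) + 1) (Finset.mem_singleton_self _)]

lemma blockB_disjoint (hjs : StrictMono jseq) {k l : ℕ} (hk : 1 ≤ k) (hkl : k < l) :
    Disjoint (blockB jseq k) (blockB jseq l) := by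
  rw [Finset.disjoint_left]
  intro x hx hx2
  rw [blockB, Finset.mem_Icc] at hx hx2
  have h1 : jseq k ≤ jseq (l - 1) := hjs.le_iff_le.mpr (by omega)
  omega

lemma JB_disjoint (hjs : StrictMono jseq) (m n : ℕ) {k l : ℕ} (hk : 1 ≤ k) (hl : 1 ≤ l)
    (hkl : k ≠ l) : Disjoint (JB jseq m n k) (JB jseq m n l) := by
  have hblock : ∀ {a b : ℕ}, 1 ≤ a → a ≠ b → 1 ≤ b →
      Disjoint ((blockB jseq (m + a)).image (fun j => 2 * j))
        ((blockB jseq (m + b)).image (fun j => 2 * j)) := by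
    intro a b ha hab hb
    rw [Finset.disjoint_left]
    intro x hx hx2
    obtain ⟨j1, hj1, rfl⟩ := Finset.mem_image.mp hx
    obtain ⟨j2, hj2, he⟩ := Finset.mem_image.mp hx2
    have : j2 = j1 := by omega
    subst this
    rcases Nat.lt_or_ge (m + a) (m + b) with h | h
    · exact (Finset.disjoint_left.mp (blockB_disjoint hjs (by omega) h) hj1) hj2
    · have h' : m + b < m + a := by omega
      exact (Finset.disjoint_left.mp (blockB_disjoint hjs (by omega) h') hj2) hj1
  have hodd : ∀ (c : ℕ) (B : Finset ℕ), Disjoint (B.image (fun j => 2 * j)) {2 * c + 1} := by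
    intro c B
    rw [Finset.disjoint_right]
    intro x hx hx2
    rw [Finset.mem_singleton] at hx
    obtain ⟨j, _, hj⟩ := Finset.mem_image.mp hx2
    omega
  unfold JB
  split <;> split
  · next h1 h2 =>
    apply Finset.disjoint_union_left.mpr
    constructor
    · apply Finset.disjoint_union_right.mpr
      exact ⟨hblock hk hkl hl, hodd _ _⟩
    · apply Finset.disjoint_union_right.mpr
      refine ⟨(hodd _ _).symm, ?_⟩
      simp only [Finset.disjoint_singleton]
      omega
  · next h1 h2 =>
    apply Finset.disjoint_union_left.mpr
    refine ⟨?_, ?_⟩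
    · rw [Finset.disjoint_right]
      intro x hx hx2
      rw [Finset.mem_singleton] at hx
      obtain ⟨j, _, hj⟩ := Finset.mem_image.mp hx2
      omega
    · simp only [Finset.disjoint_singleton]
      omega
  · next h1 h2 =>
    apply Finset.disjoint_union_right.mpr
    refine ⟨?_, ?_⟩
    · rw [Finset.disjoint_left]
      intro x hx hx2
      rw [Finset.mem_singleton] at hx
      obtain ⟨j, _, hj⟩ := Finset.mem_image.mp hx2
      omega
    · simp only [Finset.disjoint_singleton]
      omega
  · next h1 h2 =>
    simp only [Finset.disjoint_singleton]
    omega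

end BlockDefs

section Transfer

lemma iIndepFun_map_of {Ω Ω' : Type*} [MeasurableSpace Ω] [MeasurableSpace Ω']
    {P : Measure Ω} [IsProbabilityMeasure P]
    (e : Ω → Ω') (he : Measurable e) {γ : Type*} [MeasurableSpace γ] (F : ℕ → Ω' → γ)
    (hF : ∀ k, Measurable (F k))
    (h : iIndepFun (fun k ω => F k (e ω)) P) :
    iIndepFun F (Measure.map e P) := by
  rw [iIndepFun_iff_measure_inter_preimage_eq_mul]
  intro S sets hsets
  rw [iIndepFun_iff_measure_inter_preimage_eq_mul] at h
  have lhs : Measure.map e P (⋂ i ∈ S, F i ⁻¹' sets i)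
      = P (⋂ i ∈ S, (fun ω => F i (e ω)) ⁻¹' sets i) := by
    rw [Measure.map_apply he (Finset.measurableSet_biInter S (fun i hi => (hF i) (hsets i hi)))]
    congr 1
    ext ω
    simp
  have rhs : ∀ i ∈ S, Measure.map e P (F i ⁻¹' sets i)
      = P ((fun ω => F i (e ω)) ⁻¹' sets i) := by
    intro i hi
    rw [Measure.map_apply he ((hF i) (hsets i hi))]
    rfl
  rw [lhs, h S hsets, Finset.prod_congr rfl rhs]

end Transfer
section MoreAux

variable {r : ℕ → ℝ} {jseq : ℕ → ℕ}
variable {Ω : Type*} [MeasurableSpace Ω] {P : Measure Ω} [IsProbabilityMeasure P]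
  {U : ℕ → Ω → ℝ}

lemma MtF_law (hUm : ∀ i, Measurable (U i))
    (hUi : iIndepFun U P)
    (hmap : ∀ i, Measure.map (U i) P = unifMeasure)
    (hr : ∀ i, r i ∈ Set.Icc (0:ℝ) 1) (m n k : ℕ) (a : ℕ) :
    P {ω | MtF r jseq m n k (fun i => U i ω) = a} = ENNReal.ofReal (ppm 1 a) := by
  by_cases hk : k ≤ n - m
  · have htB := tB_mem (r := r) (jseq := jseq) hr (m + k)
    have hXl := sum_pq_law (P := P) hUm hUi hmap (blockB jseq (m + k)) (lamB r jseq (m + k))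
      (fun j _ => ⟨lamB_nonneg hr _ j, lamB_le_one hr _ j⟩) (fun j => 2 * j)
      (fun a b h => Nat.eq_of_mul_eq_mul_left (by norm_num) h)
    have hYl := single_pq_law (P := P) hUm hmap (t := 1 - tB r jseq (m + k))
      (by linarith [htB.2]) (by linarith [htB.1]) (2 * (m + k) + 1)
    have hXm : Measurable (fun ω => ∑ j ∈ blockB jseq (m + k),
        pq (lamB r jseq (m + k) j) (U (2 * j) ω)) :=
      Finset.measurable_sum _ (fun j _ =>
        (measurable_pq (lamB_nonneg hr _ j)).comp (hUm (2 * j)))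
    have hYm : Measurable (fun ω => pq (1 - tB r jseq (m + k)) (U (2 * (m + k) + 1) ω)) :=
      (measurable_pq (by linarith [htB.2])).comp (hUm _)
    have hind : IndepFun
        (fun ω => ∑ j ∈ blockB jseq (m + k), pq (lamB r jseq (m + k) j) (U (2 * j) ω))
        (fun ω => pq (1 - tB r jseq (m + k)) (U (2 * (m + k) + 1) ω)) P := by
      have := indepFun_comp_disjoint (P := P) hUm hUi
        ((blockB jseq (m + k)).image (fun j => 2 * j)) {2 * (m + k) + 1}
        (by
          rw [Finset.disjoint_right]
          intro x hx hx2
          rw [Finset.mem_singleton] at hx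
          obtain ⟨j, _, hj⟩ := Finset.mem_image.mp hx2
          omega)
        (fun x => ∑ j ∈ blockB jseq (m + k), pq (lamB r jseq (m + k) j) (x (2 * j)))
        (fun x => pq (1 - tB r jseq (m + k)) (x (2 * (m + k) + 1)))
        (Finset.measurable_sum _ (fun j _ =>
          (measurable_pq (lamB_nonneg hr _ j)).comp (measurable_pi_apply (2 * j))))
        ((measurable_pq (by linarith [htB.2])).comp (measurable_pi_apply _))
        (fun x y h => Finset.sum_congr rfl (fun j hj =>
          congrArg (pq (lamB r jseq (m + k) j))
            (h (2 * j) (Finset.mem_image_of_mem _ hj))))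
        (fun x y h => congrArg (pq (1 - tB r jseq (m + k)))
          (h (2 * (m + k) + 1) (Finset.mem_singleton_self _)))
      exact this
    have hconv := conv_pois hXm hYm hind
      (Finset.sum_nonneg (fun j _ => lamB_nonneg hr _ j)) (by linarith [htB.2]) hXl hYl a
    have hrate : (∑ j ∈ blockB jseq (m + k), lamB r jseq (m + k) j)
        + (1 - tB r jseq (m + k)) = 1 := by
      rw [sum_lamB]; ring
    rw [hrate] at hconv
    have hset : {ω | MtF r jseq m n k (fun i => U i ω) = a}
        = {ω | (∑ j ∈ blockB jseq (m + k), pq (lamB r jseq (m + k) j) (U (2 * j) ω))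
            + pq (1 - tB r jseq (m + k)) (U (2 * (m + k) + 1) ω) = a} := by
      ext ω
      simp only [Set.mem_setOf_eq, MtF, if_pos hk]
    rw [hset]
    exact hconv
  · have := single_pq_law (P := P) hUm hmap (t := (1:ℝ)) one_pos.le le_rfl
      (2 * (n + k) + 1) a
    have hset : {ω | MtF r jseq m n k (fun i => U i ω) = a}
        = {ω | pq 1 (U (2 * (n + k) + 1) ω) = a} := by
      ext ω
      simp only [Set.mem_setOf_eq, MtF, if_neg hk]
    rw [hset]
    exact this

lemma integral_Ywalk (hUm : ∀ i, Measurable (U i))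
    (hmap : ∀ i, Measure.map (U i) P = unifMeasure)
    (hr : ∀ i, r i ∈ Set.Icc (0:ℝ) 1) (k : ℕ) :
    (∫ ω, (Ywalk r jseq U k ω : ℝ) ∂P) = sB r jseq k := by
  have hcast : ∀ ω, ((Ywalk r jseq U k ω : ℕ) : ℝ)
      = ∑ j ∈ blockB jseq k, (Set.indicator (U j ⁻¹' Set.Iic (r j)) (fun _ => (1:ℝ)) ω) := by
    intro ω
    unfold Ywalk blockB
    push_cast
    apply Finset.sum_congr rfl
    intro j _
    rw [Set.indicator_apply]
    simp only [Set.mem_preimage, Set.mem_Iic]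
  rw [integral_congr_ae (Filter.Eventually.of_forall hcast)]
  rw [integral_finset_sum _ (fun j _ =>
    (integrable_const (1:ℝ)).indicator ((hUm j) measurableSet_Iic))]
  unfold sB
  apply Finset.sum_congr rfl
  intro j _
  have hPj : P (U j ⁻¹' Set.Iic (r j)) = ENNReal.ofReal (r j) := by
    rw [← unif_Iic_eq (hr j).1 (hr j).2, ← hmap j,
      Measure.map_apply (hUm j) measurableSet_Iic]
  rw [integral_indicator_const (1:ℝ) ((hUm j) measurableSet_Iic), measureReal_def, hPj,
    ENNReal.toReal_ofReal (hr j).1, smul_eq_mul, mul_one]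

lemma Icc1_Ioc (K : ℕ) : Finset.Icc 1 K = Finset.Ioc 0 K := by
  ext x; simp [Nat.lt_iff_add_one_le]

lemma sum_shift {M : Type*} [AddCommMonoid M] (f : ℕ → M) (m K : ℕ) :
    ∑ ℓ ∈ Finset.Ioc m (m + K), f ℓ = ∑ ℓ ∈ Finset.Ioc 0 K, f (m + ℓ) := by
  have h : (Finset.Ioc 0 K).map (addLeftEmbedding m) = Finset.Ioc m (m + K) := by
    rw [Finset.map_add_left_Ioc]
    simp
  rw [← h, Finset.sum_map]
  apply Finset.sum_congr rfl
  intro x _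
  congr 1

lemma sum_blocks {M : Type*} [AddCommMonoid M] (hjs : StrictMono jseq) (f : ℕ → M) (m : ℕ) :
    ∀ K, ∑ ℓ ∈ Finset.Icc 1 K, (∑ j ∈ blockB jseq (m + ℓ), f j)
      = ∑ j ∈ Finset.Ioc (jseq m) (jseq (m + K)), f j := by
  intro K
  induction K with
  | zero => simp
  | succ K ih =>
    rw [Icc1_Ioc] at ih ⊢
    rw [Finset.sum_Ioc_succ_top (Nat.zero_le K), ih]
    have hb : blockB jseq (m + (K + 1)) = Finset.Ioc (jseq (m + K)) (jseq (m + (K + 1))) := by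
      unfold blockB
      have h1 : m + (K + 1) - 1 = m + K := by omega
      rw [h1, Finset.Icc_add_one_left_eq_Ioc]
    rw [hb]
    exact Finset.sum_Ioc_consecutive f (hjs.le_iff_le.mpr (by omega))
      (hjs.le_iff_le.mpr (by omega))

end MoreAux
lemma measurable_Swalk {Ω : Type*} [MeasurableSpace Ω] (r : ℕ → ℝ) (jseq : ℕ → ℕ)
    (V : ℕ → Ω → ℝ) (hV : ∀ j, Measurable (V j)) (k : ℕ) :
    Measurable (fun ω => Swalk r jseq V k ω) := by
  unfold Swalk
  apply Measurable.sub _ measurable_const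
  apply Measurable.comp (measurable_from_top (f := fun x : ℕ => (x : ℤ)))
  apply Finset.measurable_sum
  intro ℓ _
  unfold Ywalk
  apply Finset.measurable_sum
  intro j _
  exact Measurable.ite ((hV j) measurableSet_Iic) measurable_const measurable_const


/-- **Lemma A.1 (coupling with a Poisson random walk).** -/
theorem coupling_with_poisson_walk
    (r : ℕ → ℝ) (jseq : ℕ → ℕ) (hrj : GoodRJ r jseq)
    {Ω : Type*} [MeasurableSpace Ω] (P : Measure Ω) [IsProbabilityMeasure P]
    (U : ℕ → Ω → ℝ) (hU : IsIIDUniform P U)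
    (m n : ℕ) (hmn : m ≤ n) :
    ∃ (Ω' : Type) (_ : MeasurableSpace Ω') (P' : Measure Ω')
      (_ : IsProbabilityMeasure P') (T Shat : ℕ → Ω' → ℤ),
      Measure.map (fun ω k => T k ω) P'
          = Measure.map (fun ω k => Swalk r jseq U k ω) P ∧
      IsPoissonWalk P' Shat ∧
      P' {ω | ∃ k : ℕ, k ≤ n - m ∧ T (k + m) ω - T m ω ≠ Shat k ω}
        ≤ ENNReal.ofReal
            (2 * (∑ j ∈ Finset.Icc (jseq m + 1) (jseq n), (r j) ^ 2)
              + 2 * (∑ k ∈ Finset.Icc m n, deltaW P r jseq U k)) := by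
  classical
  obtain ⟨hr, hjs, hj0⟩ := hrj
  obtain ⟨hUm, hUi, hUmap⟩ := hU
  set e : Ω → (ℕ → ℝ) := fun ω i => U i ω with he_def
  have he : Measurable e := measurable_pi_lambda _ hUm
  set P' : Measure (ℕ → ℝ) := Measure.map e P with hP'
  haveI : IsProbabilityMeasure P' := Measure.isProbabilityMeasure_map he.aemeasurable
  set T : ℕ → (ℕ → ℝ) → ℤ := fun k p => Swalk r jseq (fun j q => q (2 * j)) k p with hT
  set Mt : ℕ → (ℕ → ℝ) → ℕ := fun k => MtF r jseq m n k with hMt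
  set Sh : ℕ → (ℕ → ℝ) → ℤ := fun k p => ∑ ℓ ∈ Finset.Icc 1 k, ((Mt ℓ p : ℤ) - 1) with hSh
  have hMtm : ∀ k, Measurable (Mt k) := fun k => MtF_measurable hr m n k
  have hcastm : Measurable (fun x : ℕ => (x : ℤ)) := measurable_from_top
  have hShm : ∀ k, Measurable (Sh k) := by
    intro k
    apply Finset.measurable_sum
    intro ℓ _
    exact (hcastm.comp (hMtm ℓ)).sub measurable_const
  -- increments of Sh
  have hinc : ∀ (k : ℕ) (p : ℕ → ℝ), Sh (k + 1) p - Sh k p = ((Mt (k + 1) p : ℤ) - 1) := by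
    intro k p
    simp only [hSh, Icc1_Ioc]
    rw [Finset.sum_Ioc_succ_top (Nat.zero_le k)]
    ring
  -- Condition 1 : law of T
  have hstraj_m : Measurable (fun (x : ℕ → ℝ) (k : ℕ)
      => Swalk r jseq (fun j (y : ℕ → ℝ) => y j) k x) :=
    measurable_pi_lambda _ (fun k => measurable_Swalk r jseq _ (fun j => measurable_pi_apply j) k)
  have hevens : Measurable (fun (p : ℕ → ℝ) (j : ℕ) => p (2 * j)) :=
    measurable_pi_lambda _ (fun j => measurable_pi_apply _)
  have hc1 : Measure.map (fun p k => T k p) P' = Measure.map (fun ω k => Swalk r jseq U k ω) P := by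
    have h1 : (fun (p : ℕ → ℝ) (k : ℕ) => T k p)
        = (fun x k => Swalk r jseq (fun j (y : ℕ → ℝ) => y j) k x) ∘ (fun p j => p (2 * j)) := rfl
    have h2 : (fun ω (k : ℕ) => Swalk r jseq U k ω)
        = (fun x k => Swalk r jseq (fun j (y : ℕ → ℝ) => y j) k x) ∘ e := rfl
    rw [h1, h2, hP', ← Measure.map_map hstraj_m hevens, ← Measure.map_map hstraj_m he]
    congr 1
    rw [Measure.map_map hevens he]
    have h3 : (fun p j => p (2 * j)) ∘ e = fun ω (j : ℕ) => U (2 * j) ω := rfl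
    rw [h3]
    exact map_seq_eq hUm hUi hUmap (fun j => 2 * j)
      (fun a b h => Nat.eq_of_mul_eq_mul_left (by norm_num) h)
  -- Condition 2 : Poisson walk
  have hpois : IsPoissonWalk P' Sh := by
    refine ⟨hShm, ?_, ?_, ?_⟩
    · intro p; simp [hSh]
    · -- independence of increments
      have hfam : iIndepFun
          (fun (k : ℕ) (p : ℕ → ℝ) => ((Mt (k + 1) p : ℤ) - 1)) P' := by
        apply iIndepFun_map_of e he _
          (fun k => (hcastm.comp (hMtm (k + 1))).sub measurable_const)
        have := iIndep_comp_blocks (P := P) hUm hUi (fun k => JB jseq m n (k + 1))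
          (fun k l hkl => JB_disjoint hjs m n (by omega) (by omega) (by omega))
          (fun k x => ((MtF r jseq m n (k + 1) x : ℤ) - 1))
          (fun k => (hcastm.comp (MtF_measurable hr m n (k + 1))).sub measurable_const)
          (fun k x y h => congrArg (fun z : ℕ => (z : ℤ) - 1) (MtF_dep m n (k + 1) x y h))
        exact this
      have hrw : (fun (k : ℕ) (p : ℕ → ℝ) => Sh (k + 1) p - Sh k p)
          = fun (k : ℕ) (p : ℕ → ℝ) => ((Mt (k + 1) p : ℤ) - 1) := by
        funext k p; exact hinc k p
      rw [hrw]
      exact hfam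
    · intro k
      have hrw : (fun p => Sh (k + 1) p - Sh k p)
          = fun p => ((Mt (k + 1) p : ℤ) - 1) := by
        funext p; exact hinc k p
      rw [hrw]
      have hm1 : Measurable (fun p : ℕ → ℝ => ((Mt (k + 1) p : ℤ) - 1)) :=
        (hcastm.comp (hMtm (k + 1))).sub measurable_const
      have hm2 : Measurable (fun x : ℕ => (x : ℤ) - 1) := measurable_from_top
      apply Measure.ext_of_singleton
      intro z
      rw [Measure.map_apply hm1 (measurableSet_singleton z),
        Measure.map_apply hm2 (measurableSet_singleton z)]
      rcases le_or_gt 0 (z + 1) with hz | hz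
      · have hsetL : (fun p : ℕ → ℝ => ((Mt (k + 1) p : ℤ) - 1)) ⁻¹' {z}
            = Mt (k + 1) ⁻¹' {(z + 1).toNat} := by
          ext p
          simp only [Set.mem_preimage, Set.mem_singleton_iff]
          omega
        have hsetR : (fun x : ℕ => (x : ℤ) - 1) ⁻¹' {z} = {(z + 1).toNat} := by
          ext x
          simp only [Set.mem_preimage, Set.mem_singleton_iff]
          omega
        rw [hsetL, hsetR, hP',
          Measure.map_apply he ((hMtm (k + 1)) (measurableSet_singleton _)),
          poissonOne_singleton]
        exact MtF_law hUm hUi hUmap hr m n (k + 1) ((z + 1).toNat)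
      · have hsetL : (fun p : ℕ → ℝ => ((Mt (k + 1) p : ℤ) - 1)) ⁻¹' {z} = ∅ := by
          ext p
          simp only [Set.mem_preimage, Set.mem_singleton_iff, Set.mem_empty_iff_false,
            iff_false]
          omega
        have hsetR : (fun x : ℕ => (x : ℤ) - 1) ⁻¹' {z} = ∅ := by
          ext x
          simp only [Set.mem_preimage, Set.mem_singleton_iff, Set.mem_empty_iff_false,
            iff_false]
          omega
        rw [hsetL, hsetR]
        simp
  -- inequality
  set Cb : Set (ℕ → ℝ) := ⋃ i : ℕ, {p : ℕ → ℝ | p i ∉ Set.Ioo (0:ℝ) 1} with hCbdef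
  set BadB : ℕ → ℕ → Set (ℕ → ℝ) := fun ℓ j =>
    {p : ℕ → ℝ | p (2 * j) ∈ Set.Icc (1 - Real.exp (-(lamB r jseq (m + ℓ) j))) (r j)}
    ∪ {p : ℕ → ℝ | p (2 * j) ∈ Set.Iio (1 - pcdf (lamB r jseq (m + ℓ) j) 1)} with hBadBdef
  set BadG : ℕ → Set (ℕ → ℝ) := fun ℓ =>
    {p : ℕ → ℝ | p (2 * (m + ℓ) + 1) ∈ Set.Iio (1 - Real.exp (-(1 - tB r jseq (m + ℓ))))}
    with hBadGdef
  have hPev : ∀ (c : ℕ) (A : Set ℝ), MeasurableSet A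
      → P' {p : ℕ → ℝ | p c ∈ A} = unifMeasure A := by
    intro c A hA
    have h1 : {p : ℕ → ℝ | p c ∈ A} = (fun p : ℕ → ℝ => p c) ⁻¹' A := rfl
    rw [h1, hP', Measure.map_apply he ((measurable_pi_apply c) hA)]
    have h2 : e ⁻¹' ((fun p : ℕ → ℝ => p c) ⁻¹' A) = U c ⁻¹' A := rfl
    rw [h2, ← hUmap c, Measure.map_apply (hUm c) hA]
  have hCb0 : P' Cb = 0 := by
    apply measure_iUnion_null
    intro i
    have h1 : {p : ℕ → ℝ | p i ∉ Set.Ioo (0:ℝ) 1}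
        = {p : ℕ → ℝ | p i ∈ (Set.Ioo (0:ℝ) 1)ᶜ} := rfl
    rw [h1, hPev i _ measurableSet_Ioo.compl]
    exact unif_compl_Ioo
  -- event inclusion
  have hsub : {p : ℕ → ℝ | ∃ k : ℕ, k ≤ n - m ∧ T (k + m) p - T m p ≠ Sh k p}
      ⊆ Cb ∪ ⋃ ℓ ∈ Finset.Icc 1 (n - m),
          (BadG ℓ ∪ ⋃ j ∈ blockB jseq (m + ℓ), BadB ℓ j) := by
    intro p hp
    obtain ⟨k, hk, hneq⟩ := hp
    by_contra hnotin
    apply hneq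
    have hpC : ∀ i, p i ∈ Set.Ioo (0:ℝ) 1 := by
      intro i
      by_contra h
      exact hnotin (Or.inl (Set.mem_iUnion.mpr ⟨i, h⟩))
    have hpG : ∀ ℓ, ℓ ∈ Finset.Icc 1 (n - m) → p ∉ BadG ℓ := by
      intro ℓ hℓ h
      exact hnotin (Or.inr (Set.mem_iUnion₂.mpr ⟨ℓ, hℓ, Or.inl h⟩))
    have hpB : ∀ ℓ, ℓ ∈ Finset.Icc 1 (n - m) → ∀ j ∈ blockB jseq (m + ℓ), p ∉ BadB ℓ j := by
      intro ℓ hℓ j hj h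
      exact hnotin (Or.inr (Set.mem_iUnion₂.mpr ⟨ℓ, hℓ, Or.inr (Set.mem_iUnion₂.mpr ⟨j, hj, h⟩)⟩))
    have hblockeq : ∀ ℓ, ℓ ∈ Finset.Icc 1 (n - m)
        → Mt ℓ p = Ywalk r jseq (fun j (q : ℕ → ℝ) => q (2 * j)) (m + ℓ) p := by
      intro ℓ hℓ
      have hℓ' : ℓ ≤ n - m := (Finset.mem_Icc.mp hℓ).2
      have htBm := tB_mem (r := r) (jseq := jseq) hr (m + ℓ)
      have hG0 : pq (1 - tB r jseq (m + ℓ)) (p (2 * (m + ℓ) + 1)) = 0 := by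
        by_contra hG
        apply hpG ℓ hℓ
        have h1 : 1 ≤ pq (1 - tB r jseq (m + ℓ)) (p (2 * (m + ℓ) + 1)) := by omega
        exact pq_pos_lt (by linarith [htBm.2]) h1
      have hBj : ∀ j ∈ blockB jseq (m + ℓ),
          (if p (2 * j) ≤ r j then (1:ℕ) else 0) = pq (lamB r jseq (m + ℓ) j) (p (2 * j)) := by
        intro j hj
        by_contra hne
        apply hpB ℓ hℓ j hj
        have hmem := mismatch_subset (lamB_nonneg hr (m + ℓ) j) (lamB_le_r hr (m + ℓ) j)
          (hr j).2 (hpC (2 * j)).1 (hpC (2 * j)).2 hne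
        rcases hmem with h | h
        · exact Or.inl h
        · exact Or.inr h
      show Mt ℓ p = _
      simp only [hMt, MtF, if_pos hℓ']
      rw [hG0, add_zero]
      unfold Ywalk
      exact Finset.sum_congr rfl (fun j hj => (hBj j hj).symm)
    -- walk equality
    set Yw : ℕ → (ℕ → ℝ) → ℕ := fun ℓ q => Ywalk r jseq (fun j (x : ℕ → ℝ) => x (2 * j)) ℓ q
      with hYw
    have hTdef : ∀ κ, T κ p = ((∑ ℓ ∈ Finset.Icc 1 κ, Yw ℓ p : ℕ) : ℤ) - κ := fun κ => rfl
    have hsplit : ∑ ℓ ∈ Finset.Icc 1 (k + m), Yw ℓ p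
        = (∑ ℓ ∈ Finset.Icc 1 m, Yw ℓ p) + ∑ ℓ ∈ Finset.Ioc 0 k, Yw (m + ℓ) p := by
      rw [Icc1_Ioc, Icc1_Ioc, show k + m = m + k by ring,
        ← Finset.sum_Ioc_consecutive _ (Nat.zero_le m) (Nat.le_add_right m k)]
      congr 1
      exact sum_shift _ m k
    have hSh_eq : Sh k p = (∑ ℓ ∈ Finset.Ioc 0 k, (Yw (m + ℓ) p : ℤ)) - k := by
      simp only [hSh, Icc1_Ioc]
      have hterm : ∀ ℓ ∈ Finset.Ioc 0 k, ((Mt ℓ p : ℤ) - 1) = ((Yw (m + ℓ) p : ℤ) - 1) := by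
        intro ℓ hℓmem
        have h1 : ℓ ∈ Finset.Icc 1 (n - m) := by
          rw [Finset.mem_Ioc] at hℓmem
          rw [Finset.mem_Icc]
          omega
        rw [hblockeq ℓ h1]
      rw [Finset.sum_congr rfl hterm, Finset.sum_sub_distrib]
      congr 1
      rw [Finset.sum_const, Nat.card_Ioc, nsmul_eq_mul, mul_one]
      norm_num
    rw [hTdef (k + m), hTdef m, hSh_eq, hsplit]
    push_cast
    ring
  -- per-event bounds
  have hBadB_le : ∀ ℓ j, P' (BadB ℓ j)
      ≤ ENNReal.ofReal ((r j - lamB r jseq (m + ℓ) j) + r j ^ 2) := by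
    intro ℓ j
    obtain ⟨hineq, hn1, hn2⟩ := perj_bound (lamB_nonneg hr (m + ℓ) j)
      (lamB_le_r hr (m + ℓ) j) (hr j).2
    calc P' (BadB ℓ j)
        ≤ P' {p : ℕ → ℝ | p (2 * j) ∈ Set.Icc (1 - Real.exp (-(lamB r jseq (m + ℓ) j))) (r j)}
          + P' {p : ℕ → ℝ | p (2 * j) ∈ Set.Iio (1 - pcdf (lamB r jseq (m + ℓ) j) 1)} :=
          measure_union_le _ _
      _ = unifMeasure (Set.Icc (1 - Real.exp (-(lamB r jseq (m + ℓ) j))) (r j))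
          + unifMeasure (Set.Iio (1 - pcdf (lamB r jseq (m + ℓ) j) 1)) := by
          rw [hPev _ _ measurableSet_Icc, hPev _ _ measurableSet_Iio]
      _ ≤ ENNReal.ofReal (r j - (1 - Real.exp (-(lamB r jseq (m + ℓ) j))))
          + ENNReal.ofReal (1 - pcdf (lamB r jseq (m + ℓ) j) 1) :=
          add_le_add (unif_Icc_le _ _) (unif_Iio_le _)
      _ = ENNReal.ofReal ((r j - (1 - Real.exp (-(lamB r jseq (m + ℓ) j))))
          + (1 - pcdf (lamB r jseq (m + ℓ) j) 1)) := (ENNReal.ofReal_add hn1 hn2).symm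
      _ ≤ ENNReal.ofReal ((r j - lamB r jseq (m + ℓ) j) + r j ^ 2) :=
          ENNReal.ofReal_le_ofReal hineq
  have hBadG_le : ∀ ℓ, P' (BadG ℓ) ≤ ENNReal.ofReal |sB r jseq (m + ℓ) - 1| := by
    intro ℓ
    calc P' (BadG ℓ)
        = unifMeasure (Set.Iio (1 - Real.exp (-(1 - tB r jseq (m + ℓ))))) :=
          hPev _ _ measurableSet_Iio
      _ ≤ ENNReal.ofReal (1 - Real.exp (-(1 - tB r jseq (m + ℓ)))) := unif_Iio_le _
      _ ≤ ENNReal.ofReal |sB r jseq (m + ℓ) - 1| :=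
          ENNReal.ofReal_le_ofReal (le_trans one_sub_exp_neg_le (one_sub_tB_le (m + ℓ)))
  -- real-number bookkeeping
  have hdel : ∀ k, deltaW P r jseq U k = |sB r jseq k - 1| := by
    intro k
    rw [deltaW, integral_Ywalk hUm hUmap hr k]
  have hsumB : ∀ ℓ, (∑ j ∈ blockB jseq (m + ℓ), ((r j - lamB r jseq (m + ℓ) j) + r j ^ 2))
      ≤ |sB r jseq (m + ℓ) - 1| + ∑ j ∈ blockB jseq (m + ℓ), r j ^ 2 := by
    intro ℓ
    rw [Finset.sum_add_distrib]
    have h1 : ∑ j ∈ blockB jseq (m + ℓ), (r j - lamB r jseq (m + ℓ) j)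
        = sB r jseq (m + ℓ) - tB r jseq (m + ℓ) := by
      rw [Finset.sum_sub_distrib, sum_lamB]
      rfl
    rw [h1]
    have := sB_sub_tB_le (r := r) (jseq := jseq) (m + ℓ)
    linarith
  have hrealsum : (∑ ℓ ∈ Finset.Icc 1 (n - m), (|sB r jseq (m + ℓ) - 1|
        + ∑ j ∈ blockB jseq (m + ℓ), ((r j - lamB r jseq (m + ℓ) j) + r j ^ 2)))
      ≤ 2 * (∑ j ∈ Finset.Icc (jseq m + 1) (jseq n), (r j) ^ 2)
        + 2 * (∑ k ∈ Finset.Icc m n, deltaW P r jseq U k) := by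
    have step1 : (∑ ℓ ∈ Finset.Icc 1 (n - m), (|sB r jseq (m + ℓ) - 1|
          + ∑ j ∈ blockB jseq (m + ℓ), ((r j - lamB r jseq (m + ℓ) j) + r j ^ 2)))
        ≤ ∑ ℓ ∈ Finset.Icc 1 (n - m), (2 * |sB r jseq (m + ℓ) - 1|
          + ∑ j ∈ blockB jseq (m + ℓ), r j ^ 2) := by
      apply Finset.sum_le_sum
      intro ℓ _
      have := hsumB ℓ
      linarith
    have step2 : ∑ ℓ ∈ Finset.Icc 1 (n - m), (2 * |sB r jseq (m + ℓ) - 1|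
          + ∑ j ∈ blockB jseq (m + ℓ), r j ^ 2)
        = 2 * (∑ ℓ ∈ Finset.Icc 1 (n - m), |sB r jseq (m + ℓ) - 1|)
          + ∑ ℓ ∈ Finset.Icc 1 (n - m), ∑ j ∈ blockB jseq (m + ℓ), r j ^ 2 := by
      rw [Finset.sum_add_distrib, Finset.mul_sum]
    have step3 : ∑ ℓ ∈ Finset.Icc 1 (n - m), ∑ j ∈ blockB jseq (m + ℓ), r j ^ 2
        = ∑ j ∈ Finset.Icc (jseq m + 1) (jseq n), r j ^ 2 := by
      rw [sum_blocks hjs _ m (n - m)]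
      have h1 : m + (n - m) = n := by omega
      rw [h1]
      congr 1
      ext x
      simp only [Finset.mem_Ioc, Finset.mem_Icc]
      omega
    have step4 : ∑ ℓ ∈ Finset.Icc 1 (n - m), |sB r jseq (m + ℓ) - 1|
        ≤ ∑ k ∈ Finset.Icc m n, deltaW P r jseq U k := by
      have h1 : ∑ ℓ ∈ Finset.Icc 1 (n - m), |sB r jseq (m + ℓ) - 1|
          = ∑ k ∈ Finset.Ioc m n, |sB r jseq k - 1| := by
        rw [Icc1_Ioc, ← sum_shift (fun k => |sB r jseq k - 1|) m (n - m)]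
        have h2 : m + (n - m) = n := by omega
        rw [h2]
      rw [h1]
      have h3 : ∀ k ∈ Finset.Ioc m n, |sB r jseq k - 1| = deltaW P r jseq U k :=
        fun k _ => (hdel k).symm
      rw [Finset.sum_congr rfl h3]
      apply Finset.sum_le_sum_of_subset_of_nonneg
      · intro x hx
        rw [Finset.mem_Ioc] at hx
        rw [Finset.mem_Icc]
        omega
      · intro k _ _
        rw [hdel k]
        exact abs_nonneg _
    have hr2nonneg : 0 ≤ ∑ j ∈ Finset.Icc (jseq m + 1) (jseq n), r j ^ 2 :=
      Finset.sum_nonneg fun j _ => sq_nonneg _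
    calc (∑ ℓ ∈ Finset.Icc 1 (n - m), (|sB r jseq (m + ℓ) - 1|
          + ∑ j ∈ blockB jseq (m + ℓ), ((r j - lamB r jseq (m + ℓ) j) + r j ^ 2)))
        ≤ 2 * (∑ ℓ ∈ Finset.Icc 1 (n - m), |sB r jseq (m + ℓ) - 1|)
          + ∑ ℓ ∈ Finset.Icc 1 (n - m), ∑ j ∈ blockB jseq (m + ℓ), r j ^ 2 := by
          rw [← step2]; exact step1
      _ ≤ 2 * (∑ k ∈ Finset.Icc m n, deltaW P r jseq U k)
          + ∑ j ∈ Finset.Icc (jseq m + 1) (jseq n), r j ^ 2 := by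
          rw [step3]
          have := step4
          linarith
      _ ≤ 2 * (∑ j ∈ Finset.Icc (jseq m + 1) (jseq n), (r j) ^ 2)
          + 2 * (∑ k ∈ Finset.Icc m n, deltaW P r jseq U k) := by
          linarith
  -- assemble the measure bound
  have hbound : P' {p : ℕ → ℝ | ∃ k : ℕ, k ≤ n - m ∧ T (k + m) p - T m p ≠ Sh k p}
      ≤ ENNReal.ofReal
          (2 * (∑ j ∈ Finset.Icc (jseq m + 1) (jseq n), (r j) ^ 2)
            + 2 * (∑ k ∈ Finset.Icc m n, deltaW P r jseq U k)) := by
    calc P' {p : ℕ → ℝ | ∃ k : ℕ, k ≤ n - m ∧ T (k + m) p - T m p ≠ Sh k p}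
        ≤ P' (Cb ∪ ⋃ ℓ ∈ Finset.Icc 1 (n - m),
            (BadG ℓ ∪ ⋃ j ∈ blockB jseq (m + ℓ), BadB ℓ j)) := measure_mono hsub
      _ ≤ P' Cb + P' (⋃ ℓ ∈ Finset.Icc 1 (n - m),
            (BadG ℓ ∪ ⋃ j ∈ blockB jseq (m + ℓ), BadB ℓ j)) := measure_union_le _ _
      _ = P' (⋃ ℓ ∈ Finset.Icc 1 (n - m),
            (BadG ℓ ∪ ⋃ j ∈ blockB jseq (m + ℓ), BadB ℓ j)) := by rw [hCb0, zero_add]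
      _ ≤ ∑ ℓ ∈ Finset.Icc 1 (n - m),
            P' (BadG ℓ ∪ ⋃ j ∈ blockB jseq (m + ℓ), BadB ℓ j) := by
          exact measure_biUnion_finset_le _ _
      _ ≤ ∑ ℓ ∈ Finset.Icc 1 (n - m),
            (ENNReal.ofReal (|sB r jseq (m + ℓ) - 1|
              + ∑ j ∈ blockB jseq (m + ℓ), ((r j - lamB r jseq (m + ℓ) j) + r j ^ 2))) := by
          apply Finset.sum_le_sum
          intro ℓ _
          calc P' (BadG ℓ ∪ ⋃ j ∈ blockB jseq (m + ℓ), BadB ℓ j)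
              ≤ P' (BadG ℓ) + P' (⋃ j ∈ blockB jseq (m + ℓ), BadB ℓ j) := measure_union_le _ _
            _ ≤ ENNReal.ofReal |sB r jseq (m + ℓ) - 1|
                + ∑ j ∈ blockB jseq (m + ℓ), P' (BadB ℓ j) :=
                add_le_add (hBadG_le ℓ) (measure_biUnion_finset_le _ _)
            _ ≤ ENNReal.ofReal |sB r jseq (m + ℓ) - 1|
                + ∑ j ∈ blockB jseq (m + ℓ),
                    ENNReal.ofReal ((r j - lamB r jseq (m + ℓ) j) + r j ^ 2) :=
                add_le_add le_rfl (Finset.sum_le_sum (fun j _ => hBadB_le ℓ j))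
            _ = ENNReal.ofReal (|sB r jseq (m + ℓ) - 1|
                + ∑ j ∈ blockB jseq (m + ℓ), ((r j - lamB r jseq (m + ℓ) j) + r j ^ 2)) := by
                rw [← ENNReal.ofReal_sum_of_nonneg (fun j _ => by
                  have h1 := lamB_le_r (r := r) (jseq := jseq) hr (m + ℓ) j
                  have h2 := sq_nonneg (r j)
                  linarith)]
                rw [← ENNReal.ofReal_add (abs_nonneg _) (Finset.sum_nonneg (fun j _ => by
                  have h1 := lamB_le_r (r := r) (jseq := jseq) hr (m + ℓ) j
                  have h2 := sq_nonneg (r j)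
                  linarith))]
      _ = ENNReal.ofReal (∑ ℓ ∈ Finset.Icc 1 (n - m), (|sB r jseq (m + ℓ) - 1|
            + ∑ j ∈ blockB jseq (m + ℓ), ((r j - lamB r jseq (m + ℓ) j) + r j ^ 2))) := by
          rw [← ENNReal.ofReal_sum_of_nonneg]
          intro ℓ _
          have h1 : 0 ≤ ∑ j ∈ blockB jseq (m + ℓ), ((r j - lamB r jseq (m + ℓ) j) + r j ^ 2) :=
            Finset.sum_nonneg (fun j _ => by
              have h1 := lamB_le_r (r := r) (jseq := jseq) hr (m + ℓ) j
              have h2 := sq_nonneg (r j)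
              linarith)
          have h2 := abs_nonneg (sB r jseq (m + ℓ) - 1)
          linarith
      _ ≤ ENNReal.ofReal
          (2 * (∑ j ∈ Finset.Icc (jseq m + 1) (jseq n), (r j) ^ 2)
            + 2 * (∑ k ∈ Finset.Icc m n, deltaW P r jseq U k)) :=
          ENNReal.ofReal_le_ofReal hrealsum
  exact ⟨ℕ → ℝ, inferInstance, P', inferInstance, T, Sh, hc1, hpois, hbound⟩


end WRTHeight
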